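/- arXiv:2501.01931 — 7 statements merged into one kernel-verified Lean document; each statement's English description precedes it below -/
import Mathlib

section
/- For every m > 0 there exists ε > 0, depending only on m, with the following property: if e and f are disjoint Jordan arcs in ℂ, and Γ is the family of all rectifiable closed curves in ℂ ∖ (e ∪ f) such that e and f lie in different connected components of the complement of the curve, and if the modulus satisfies M(Γ) ≥ m, then dist(e, f) ≥ ε · min(diam(e), diam(f)). -/
open MeasureTheory Set Metric
open scoped ENNReal NNReal

noncomputable section

/-- Line integral of a Borel function `ρ` with respect to arclength along a
Lipschitz (rectifiable) curve parametrized on `[0,1]`. -/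
def lineIntegral (ρ : ℂ → ℝ≥0∞) (γ : ℝ → ℂ) : ℝ≥0∞ :=
  ∫⁻ t in Icc (0:ℝ) 1, ρ (γ t) * ENNReal.ofReal ‖deriv γ t‖

/-- A rectifiable curve: a Lipschitz parametrization on `[0,1]`. -/
def RectCurve (γ : ℝ → ℂ) : Prop :=
  ∃ K : ℝ≥0, LipschitzOnWith K γ (Icc 0 1)

/-- `ρ` is admissible for the curve family `Γ` if it is Borel measurable and the
arclength integral of `ρ` along every curve of `Γ` is at least `1`. -/
def Admissible (ρ : ℂ → ℝ≥0∞) (Γ : Set (ℝ → ℂ)) : Prop :=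
  Measurable ρ ∧ ∀ γ ∈ Γ, 1 ≤ lineIntegral ρ γ

/-- The modulus of a family of curves: the infimum of `∫ ρ²` over all admissible `ρ`. -/
def modulus (Γ : Set (ℝ → ℂ)) : ℝ≥0∞ :=
  ⨅ (ρ : ℂ → ℝ≥0∞) (_ : Admissible ρ Γ), ∫⁻ z : ℂ, ρ z ^ 2

/-- A Jordan arc: a homeomorphic image of the compact nondegenerate interval `[0,1]`. -/
def JordanArc (e : Set ℂ) : Prop :=
  ∃ φ : ℝ → ℂ, ContinuousOn φ (Icc 0 1) ∧ InjOn φ (Icc 0 1) ∧ e = φ '' Icc 0 1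

/-- The family of rectifiable closed curves in `ℂ \ (e ∪ f)` such that `e` and `f`
lie in different connected components of the complement of the curve. -/
def ClosedCurveSeparating (e f : Set ℂ) : Set (ℝ → ℂ) :=
  {γ | RectCurve γ ∧ γ 0 = γ 1 ∧ (γ '' Icc 0 1) ⊆ (e ∪ f)ᶜ ∧
    ∀ x ∈ e, ∀ y ∈ f,
      connectedComponentIn ((γ '' Icc 0 1)ᶜ) x ≠ connectedComponentIn ((γ '' Icc 0 1)ᶜ) y}

/-- Euclidean distance between two sets. -/
def setDist (s t : Set ℂ) : ℝ := sInf (Set.image2 dist s t)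

/-- log is 1/a-Lipschitz on `[a, ∞)`. -/
lemma logLip {a : ℝ} (ha : 0 < a) {u v : ℝ} (hu : a ≤ u) (hv : a ≤ v) :
    |Real.log u - Real.log v| ≤ a⁻¹ * |u - v| := by
  have key : ∀ x y : ℝ, a ≤ x → a ≤ y → y ≤ x →
      Real.log x - Real.log y ≤ a⁻¹ * (x - y) := by
    intro x y hx hy hyx
    have hy0 : 0 < y := lt_of_lt_of_le ha hy
    have hx0 : 0 < x := lt_of_lt_of_le ha hx
    have h1 : Real.log x - Real.log y = Real.log (x / y) := (Real.log_div hx0.ne' hy0.ne').symm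
    have h2 : Real.log (x / y) ≤ x / y - 1 :=
      Real.log_le_sub_one_of_pos (by positivity)
    have h3 : x / y - 1 = (x - y) / y := by field_simp
    have h4 : (x - y) / y ≤ (x - y) / a := by
      apply div_le_div_of_nonneg_left (by linarith) ha hy
    calc Real.log x - Real.log y = Real.log (x / y) := h1
      _ ≤ x / y - 1 := h2
      _ = (x - y) / y := h3
      _ ≤ (x - y) / a := h4
      _ = a⁻¹ * (x - y) := by rw [div_eq_inv_mul]
  rcases le_total v u with h | h
  · rw [abs_of_nonneg (sub_nonneg.2 (Real.log_le_log (lt_of_lt_of_le ha hv) h)),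
      abs_of_nonneg (by linarith : (0:ℝ) ≤ u - v)]
    exact key u v hu hv h
  · rw [abs_sub_comm, abs_sub_comm u v,
      abs_of_nonneg (sub_nonneg.2 (Real.log_le_log (lt_of_lt_of_le ha hu) h)),
      abs_of_nonneg (by linarith : (0:ℝ) ≤ v - u)]
    exact key v u hv hu h

/-- clamping to `[a,b]` is `1`-Lipschitz. -/
lemma clampLip (a b : ℝ) (u v : ℝ) :
    |max a (min b u) - max a (min b v)| ≤ |u - v| := by
  have h1 : |max a (min b u) - max a (min b v)| ≤ |min b u - min b v| := by
    rw [max_comm a (min b u), max_comm a (min b v)]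
    exact abs_max_sub_max_le_abs _ _ _
  refine h1.trans ?_
  rcases le_total u b with h | h <;> rcases le_total v b with h' | h' <;>
    simp [min_eq_left, min_eq_right, h, h', abs_le] <;> cases abs_cases (u - v) <;>
    cases abs_cases (v - u) <;> constructor <;> linarith

/-- local Lipschitz estimate for the clamped log `ψ r = log (max a (min b r))`. -/
lemma psiLoc {a b c : ℝ} (ha : 0 < a) (hc : 0 < c) (hcb : c ≤ b) {x y : ℝ}
    (hx : c ≤ x) (hy : c ≤ y) :
    |Real.log (max a (min b x)) - Real.log (max a (min b y))| ≤ (max a c)⁻¹ * |x - y| := by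
  have hmac : 0 < max a c := lt_max_of_lt_left ha
  have hclx : max a c ≤ max a (min b x) := max_le_max le_rfl (le_min hcb hx)
  have hcly : max a c ≤ max a (min b y) := max_le_max le_rfl (le_min hcb hy)
  calc |Real.log (max a (min b x)) - Real.log (max a (min b y))|
      ≤ (max a c)⁻¹ * |max a (min b x) - max a (min b y)| := logLip hmac hclx hcly
    _ ≤ (max a c)⁻¹ * |x - y| := by
        apply mul_le_mul_of_nonneg_left (clampLip a b x y) (inv_nonneg.2 hmac.le)

/-- slope comparison: if `|F u - F u₀| ≤ c ‖γ u - γ u₀‖` near `u₀` and both are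
differentiable at `u₀`, then `|F' u₀| ≤ c ‖γ' u₀‖`. -/
lemma slopeBound {F : ℝ → ℝ} {γ : ℝ → ℂ} {u0 c : ℝ}
    (hF : DifferentiableAt ℝ F u0) (hγ : DifferentiableAt ℝ γ u0)
    (H : ∀ᶠ u in nhds u0, |F u - F u0| ≤ c * ‖γ u - γ u0‖) :
    |deriv F u0| ≤ c * ‖deriv γ u0‖ := by
  have hFs : Filter.Tendsto (slope F u0) (nhdsWithin u0 {u0}ᶜ) (nhds (deriv F u0)) :=
    hasDerivAt_iff_tendsto_slope.1 hF.hasDerivAt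
  have hγs : Filter.Tendsto (slope γ u0) (nhdsWithin u0 {u0}ᶜ) (nhds (deriv γ u0)) :=
    hasDerivAt_iff_tendsto_slope.1 hγ.hasDerivAt
  have h1 : Filter.Tendsto (fun u => |slope F u0 u|) (nhdsWithin u0 {u0}ᶜ)
      (nhds |deriv F u0|) := hFs.abs
  have h2 : Filter.Tendsto (fun u => c * ‖slope γ u0 u‖) (nhdsWithin u0 {u0}ᶜ)
      (nhds (c * ‖deriv γ u0‖)) := (hγs.norm.const_mul c)
  apply le_of_tendsto_of_tendsto h1 h2
  filter_upwards [self_mem_nhdsWithin, nhdsWithin_le_nhds H] with u hu hineq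
  have hne : u - u0 ≠ 0 := sub_ne_zero.2 hu
  have habs : 0 < |u - u0| := abs_pos.2 hne
  rw [slope_def_module, slope_def_module]
  have key : ‖(u - u0)⁻¹ • (F u - F u0)‖ ≤ c * ‖(u - u0)⁻¹ • (γ u - γ u0)‖ := by
    rw [norm_smul, norm_smul, norm_inv, Real.norm_eq_abs, Real.norm_eq_abs,
      ← mul_assoc, mul_comm c |u - u0|⁻¹, mul_assoc]
    exact mul_le_mul_of_nonneg_left hineq (inv_nonneg.2 habs.le)
  simpa [Real.norm_eq_abs, abs_mul, abs_inv] using key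

/-- determinant of a continuous linear endomorphism of `ℝ` is its value at `1`. -/
lemma det_one_dim (f : ℝ →L[ℝ] ℝ) : ContinuousLinearMap.det f = f 1 := by
  have h : (f : ℝ →ₗ[ℝ] ℝ) = (f 1) • LinearMap.id := by
    ext
    simp [mul_comm]
  rw [ContinuousLinearMap.det, h, LinearMap.det_smul]
  simp


/-- complement of an open ball in `ℂ` is preconnected. -/
lemma outerPreconnected (p : ℂ) {b : ℝ} (hb : 0 < b) : IsPreconnected ((ball p b)ᶜ) := by
  have h1 : IsConnected (sphere (0:ℂ) 1) := by
    apply isConnected_sphere ?_ 0 zero_le_one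
    rw [Complex.rank_real_complex]
    norm_num
  have h2 : IsConnected (Ici b) := isConnected_Ici
  have h3 : IsConnected ((sphere (0:ℂ) 1) ×ˢ (Ici b)) := h1.prod h2
  have h4 : IsConnected ((fun q : ℂ × ℝ => p + q.2 • q.1) '' ((sphere (0:ℂ) 1) ×ˢ (Ici b))) :=
    h3.image _ (Continuous.continuousOn (by continuity))
  have himg : (fun q : ℂ × ℝ => p + q.2 • q.1) '' ((sphere (0:ℂ) 1) ×ˢ (Ici b))
      = (ball p b)ᶜ := by
    ext z
    constructor
    · rintro ⟨⟨w, r⟩, ⟨hw, hr⟩, rfl⟩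
      simp only [mem_sphere, dist_zero_right] at hw
      simp only [mem_Ici] at hr
      simp only [mem_compl_iff, mem_ball, not_lt, dist_eq_norm]
      have : p + r • w - p = r • w := by ring
      rw [this, norm_smul, hw, Real.norm_eq_abs, abs_of_nonneg (le_trans hb.le hr)]
      simpa using hr
    · intro hz
      simp only [mem_compl_iff, mem_ball, not_lt, dist_eq_norm] at hz
      have hr0 : 0 < ‖z - p‖ := lt_of_lt_of_le hb hz
      refine ⟨(‖z - p‖⁻¹ • (z - p), ‖z - p‖), ⟨?_, hz⟩, ?_⟩
      · simp only [mem_sphere, dist_zero_right, norm_smul, norm_inv, norm_norm]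
        rw [inv_mul_cancel₀ hr0.ne']
      · simp only [smul_smul]
        rw [mul_inv_cancel₀ hr0.ne', one_smul]
        ring
  rw [himg] at h4
  exact h4.isPreconnected

/-- two points in a common preconnected subset of `Ω` have the same connected
component in `Ω`. -/
lemma ccIn_eq_of_mem {C Ω : Set ℂ} (hC : IsPreconnected C) (hsub : C ⊆ Ω) {u v : ℂ}
    (hu : u ∈ C) (hv : v ∈ C) :
    connectedComponentIn Ω u = connectedComponentIn Ω v :=
  connectedComponentIn_eq (hC.subset_connectedComponentIn hu hsub hv)

/-- a set of diameter at least `D` has a point at distance at least `3D/8` from any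
given point of it. -/
lemma farPoint {S : Set ℂ} {q : ℂ} {D : ℝ} (hD : 0 < D) (hq : q ∈ S)
    (hdiam : D ≤ Metric.diam S) : ∃ u ∈ S, 3 * D / 8 ≤ dist u q := by
  by_contra h
  push_neg at h
  have : Metric.diam S ≤ 3 * D / 4 := by
    apply Metric.diam_le_of_forall_dist_le (by linarith)
    intro x hx y hy
    calc dist x y ≤ dist x q + dist y q := dist_triangle_right x y q
      _ ≤ 3 * D / 8 + 3 * D / 8 := add_le_add (h x hx).le (h y hy).le
      _ = 3 * D / 4 := by ring
  linarith

set_option maxHeartbeats 1000000 in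
/-- the key crossing estimate: a Lipschitz curve on `[0,1]` passing within `a` of `p`
and reaching distance at least `b` from `p` picks up mass `log (b/a)` against the
density `z ↦ (max a ‖z-p‖)⁻¹` restricted to `closedBall p b`. -/
lemma crossing {K : ℝ≥0} {γ : ℝ → ℂ} (hK : LipschitzOnWith K γ (Icc 0 1)) (p : ℂ)
    {a b : ℝ} (ha : 0 < a) (hab : a ≤ b) {s t : ℝ} (hs : s ∈ Icc (0:ℝ) 1)
    (ht : t ∈ Icc (0:ℝ) 1) (hsa : ‖γ s - p‖ ≤ a) (htb : b ≤ ‖γ t - p‖) :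
    ENNReal.ofReal (Real.log (b / a)) ≤
      ∫⁻ u in Icc (0:ℝ) 1,
        ENNReal.ofReal ((closedBall p b).indicator (fun z => (max a ‖z - p‖)⁻¹) (γ u)) *
          ENNReal.ofReal ‖deriv γ u‖ := by
  have hb : 0 < b := lt_of_lt_of_le ha hab
  -- the globally Lipschitz extension of γ
  set γc : ℝ → ℂ := fun u => (Icc (0:ℝ) 1).restrict γ (projIcc 0 1 zero_le_one u) with hγcdef
  have hγc_eq : ∀ u ∈ Icc (0:ℝ) 1, γc u = γ u := by
    intro u hu
    rw [hγcdef]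
    simp only [projIcc_of_mem zero_le_one hu]
    rfl
  have hγcLip : LipschitzWith K γc := by
    have h1 : LipschitzWith K ((Icc (0:ℝ) 1).restrict γ) := hK.to_restrict
    have h2 := h1.comp (LipschitzWith.projIcc (a := (0:ℝ)) (b := 1) zero_le_one)
    rw [mul_one] at h2
    exact h2
  -- the clamped logarithmic distance
  set G : ℝ → ℝ := fun u => Real.log (max a (min b ‖γc u - p‖)) with hGdef
  have hgcont : Continuous fun u => ‖γc u - p‖ :=
    (hγcLip.continuous.sub continuous_const).norm
  have hψ : ∀ x y : ℝ, |Real.log (max a (min b x)) - Real.log (max a (min b y))| ≤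
      a⁻¹ * |x - y| := by
    intro x y
    calc |Real.log (max a (min b x)) - Real.log (max a (min b y))|
        ≤ a⁻¹ * |max a (min b x) - max a (min b y)| :=
          logLip ha (le_max_left _ _) (le_max_left _ _)
      _ ≤ a⁻¹ * |x - y| :=
          mul_le_mul_of_nonneg_left (clampLip a b x y) (inv_nonneg.2 ha.le)
  have hGLip : LipschitzWith (Real.toNNReal a⁻¹ * K) G := by
    apply LipschitzWith.of_dist_le_mul
    intro u v
    have h1 : dist (G u) (G v) = |G u - G v| := Real.dist_eq _ _
    have h2 : |‖γc u - p‖ - ‖γc v - p‖| ≤ ‖γc u - γc v‖ := by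
      calc |‖γc u - p‖ - ‖γc v - p‖| ≤ ‖(γc u - p) - (γc v - p)‖ := abs_norm_sub_norm_le _ _
        _ = ‖γc u - γc v‖ := by rw [sub_sub_sub_cancel_right]
    have h3 : ‖γc u - γc v‖ ≤ K * dist u v := by
      rw [← dist_eq_norm]; exact hγcLip.dist_le_mul u v
    calc dist (G u) (G v) = |G u - G v| := h1
      _ ≤ a⁻¹ * |‖γc u - p‖ - ‖γc v - p‖| := hψ _ _
      _ ≤ a⁻¹ * (K * dist u v) := by
          apply mul_le_mul_of_nonneg_left (h2.trans h3) (inv_nonneg.2 ha.le)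
      _ = (Real.toNNReal a⁻¹ * K : ℝ≥0) * dist u v := by
          rw [NNReal.coe_mul, Real.coe_toNNReal _ (inv_nonneg.2 ha.le), mul_assoc]
  -- Rademacher
  have hγc_ae : ∀ᵐ u : ℝ, DifferentiableAt ℝ γc u := hγcLip.ae_differentiableAt
  have hG_ae : ∀ᵐ u : ℝ, DifferentiableAt ℝ G u := hGLip.ae_differentiableAt
  -- the good set
  set sSet : Set ℝ := Ioo (min s t) (max s t) ∩
      ({u | DifferentiableAt ℝ γc u} ∩ {u | DifferentiableAt ℝ G u}) with hsSetdef
  have hsMeas : MeasurableSet sSet :=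
    measurableSet_Ioo.inter ((measurableSet_of_differentiableAt ℝ γc).inter
      (measurableSet_of_differentiableAt ℝ G))
  -- endpoint values
  have hGs : G s = Real.log a := by
    rw [hGdef]
    simp only [hγc_eq s hs]
    rw [min_eq_right (hsa.trans hab), max_eq_left hsa]
  have hGt : G t = Real.log b := by
    rw [hGdef]
    simp only [hγc_eq t ht]
    rw [min_eq_left htb, max_eq_right hab]
  -- IVT lower bound on the image measure
  have hIVT : ENNReal.ofReal (Real.log (b / a)) ≤ volume (G '' uIcc s t) := by
    have h1 : uIcc (G s) (G t) ⊆ G '' uIcc s t :=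
      intermediate_value_uIcc (hGLip.continuous.continuousOn)
    have h2 : volume (uIcc (G s) (G t)) = ENNReal.ofReal |G t - G s| := Real.volume_interval
    have h3 : |G t - G s| = Real.log (b / a) := by
      rw [hGs, hGt, abs_of_nonneg (sub_nonneg.2 (Real.log_le_log ha hab)),
        Real.log_div hb.ne' ha.ne']
    calc ENNReal.ofReal (Real.log (b / a)) = volume (uIcc (G s) (G t)) := by rw [h2, h3]
      _ ≤ volume (G '' uIcc s t) := measure_mono h1
  -- the bad set is null
  have hBadNull : volume (G '' (uIcc s t \ sSet)) = 0 := by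
    have hBad0 : volume (uIcc s t \ sSet) = 0 := by
      have hsub : uIcc s t \ sSet ⊆ ({min s t, max s t} : Set ℝ) ∪
          ({u | ¬ DifferentiableAt ℝ γc u} ∪ {u | ¬ DifferentiableAt ℝ G u}) := by
        rintro u ⟨hu1, hu2⟩
        rw [uIcc] at hu1
        rcases eq_or_lt_of_le hu1.1 with h | h
        · exact Or.inl (Or.inl h.symm)
        rcases eq_or_lt_of_le hu1.2 with h' | h'
        · exact Or.inl (Or.inr h')
        by_cases hd1 : DifferentiableAt ℝ γc u
        · by_cases hd2 : DifferentiableAt ℝ G u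
          · exact absurd ⟨⟨h, h'⟩, hd1, hd2⟩ hu2
          · exact Or.inr (Or.inr hd2)
        · exact Or.inr (Or.inl hd1)
      apply measure_mono_null hsub
      apply measure_union_null
      · exact Set.Countable.measure_zero ((countable_singleton _).insert _) volume
      · exact measure_union_null (ae_iff.1 hγc_ae) (ae_iff.1 hG_ae)
    have h1 : volume (G '' (uIcc s t \ sSet)) = μH[1] (G '' (uIcc s t \ sSet)) := by
      rw [MeasureTheory.hausdorffMeasure_real]
    have h2 : (μH[1] : Measure ℝ) (G '' (uIcc s t \ sSet)) ≤
        (Real.toNNReal a⁻¹ * K : ℝ≥0∞) ^ (1:ℝ) * μH[1] (uIcc s t \ sSet) :=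
      hGLip.hausdorffMeasure_image_le zero_le_one _
    rw [h1]
    have h3 : (μH[1] : Measure ℝ) (uIcc s t \ sSet) = 0 := by
      rw [MeasureTheory.hausdorffMeasure_real]; exact hBad0
    rw [h3, mul_zero] at h2
    exact le_antisymm h2 zero_le
  -- image of good set dominates
  have hgood : ENNReal.ofReal (Real.log (b / a)) ≤ volume (G '' sSet) := by
    refine hIVT.trans ?_
    have hcover : G '' uIcc s t ⊆ G '' sSet ∪ G '' (uIcc s t \ sSet) := by
      rw [← image_union]
      apply image_mono
      intro u hu
      by_cases h : u ∈ sSet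
      · exact Or.inl h
      · exact Or.inr ⟨hu, h⟩
    calc volume (G '' uIcc s t) ≤ volume (G '' sSet ∪ G '' (uIcc s t \ sSet)) :=
          measure_mono hcover
      _ ≤ volume (G '' sSet) + volume (G '' (uIcc s t \ sSet)) := measure_union_le _ _
      _ = volume (G '' sSet) := by rw [hBadNull, add_zero]
  -- Jacobian bound
  have hjac : volume (G '' sSet) ≤ ∫⁻ u in sSet, ENNReal.ofReal |deriv G u| := by
    have h1 := MeasureTheory.addHaar_image_le_lintegral_abs_det_fderiv volume hsMeas
      (fun u hu => (hu.2.2 : DifferentiableAt ℝ G u).hasFDerivAt.hasFDerivWithinAt)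
    simpa only [det_one_dim, fderiv_apply_one_eq_deriv] using h1
  -- pointwise bound on the good set
  have hpt : ∀ u ∈ sSet, ENNReal.ofReal |deriv G u| ≤
      ENNReal.ofReal ((closedBall p b).indicator (fun z => (max a ‖z - p‖)⁻¹) (γc u)) *
        ENNReal.ofReal ‖deriv γc u‖ := by
    rintro u ⟨huI, hdγ, hdG⟩
    by_cases hra : ‖γc u - p‖ < a
    · -- locally G = log a
      have hev : ∀ᶠ u' in nhds u, G u' = Real.log a := by
        have h2 : ∀ᶠ u' in nhds u, ‖γc u' - p‖ < a :=
          hgcont.continuousAt.preimage_mem_nhds (Iio_mem_nhds hra)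
        filter_upwards [h2] with u' hu'
        rw [hGdef]
        simp only
        rw [min_eq_right (hu'.le.trans hab), max_eq_left hu'.le]
      have hd0 : deriv G u = 0 := by
        have h3 : deriv G u = deriv (fun _ => Real.log a) u :=
          Filter.EventuallyEq.deriv_eq hev
        rw [h3, deriv_const]
      rw [hd0]
      simp
    by_cases hrb : b < ‖γc u - p‖
    · -- locally G = log b
      have hev : ∀ᶠ u' in nhds u, G u' = Real.log b := by
        have h2 : ∀ᶠ u' in nhds u, b < ‖γc u' - p‖ :=
          hgcont.continuousAt.preimage_mem_nhds (Ioi_mem_nhds hrb)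
        filter_upwards [h2] with u' hu'
        rw [hGdef]
        simp only
        rw [min_eq_left hu'.le, max_eq_right hab]
      have hd0 : deriv G u = 0 := by
        have h3 : deriv G u = deriv (fun _ => Real.log b) u :=
          Filter.EventuallyEq.deriv_eq hev
        rw [h3, deriv_const]
      rw [hd0]
      simp
    -- main case  a ≤ r0 ≤ b
    push_neg at hra hrb
    set r0 := ‖γc u - p‖ with hr0def
    have hr0pos : 0 < r0 := lt_of_lt_of_le ha hra
    have hmem : γc u ∈ closedBall p b := by
      rw [mem_closedBall, dist_eq_norm]; exact hrb
    rw [indicator_of_mem hmem]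
    have hreal : |deriv G u| * r0 ≤ ‖deriv γc u‖ := by
      have hstep : ∀ ε ∈ Ioo (0:ℝ) a, |deriv G u| * (r0 - ε) ≤ ‖deriv γc u‖ := by
        intro ε hε
        simp only [mem_Ioo] at hε
        obtain ⟨hε1, hε2⟩ := hε
        have hc0 : 0 < r0 - ε := by linarith [hra]
        have hcb : r0 - ε ≤ b := by linarith [hrb]
        have hev : ∀ᶠ u' in nhds u, |G u' - G u| ≤ (max a (r0 - ε))⁻¹ * ‖γc u' - γc u‖ := by
          have h2 : ∀ᶠ u' in nhds u, r0 - ε < ‖γc u' - p‖ :=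
            hgcont.continuousAt.preimage_mem_nhds (Ioi_mem_nhds (by linarith))
          filter_upwards [h2] with u' hu'
          have h4 := psiLoc ha hc0 hcb (x := ‖γc u' - p‖) (y := r0) hu'.le (by linarith)
          have h5 : |G u' - G u| = |Real.log (max a (min b ‖γc u' - p‖)) -
              Real.log (max a (min b r0))| := by rw [hGdef]
          rw [h5]
          refine h4.trans ?_
          apply mul_le_mul_of_nonneg_left _ (inv_nonneg.2 (le_max_of_le_left ha.le))
          calc |‖γc u' - p‖ - r0| ≤ ‖(γc u' - p) - (γc u - p)‖ := abs_norm_sub_norm_le _ _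
            _ = ‖γc u' - γc u‖ := by rw [sub_sub_sub_cancel_right]
        have hsb := slopeBound hdG hdγ hev
        have h5 : r0 - ε ≤ max a (r0 - ε) := le_max_right _ _
        calc |deriv G u| * (r0 - ε) ≤ |deriv G u| * max a (r0 - ε) :=
              mul_le_mul_of_nonneg_left h5 (abs_nonneg _)
          _ ≤ ((max a (r0 - ε))⁻¹ * ‖deriv γc u‖) * max a (r0 - ε) :=
              mul_le_mul_of_nonneg_right hsb (le_trans hc0.le h5)
          _ = ‖deriv γc u‖ := by
              field_simp
      have htend : Filter.Tendsto (fun ε : ℝ => |deriv G u| * (r0 - ε))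
          (nhdsWithin 0 (Ioi 0)) (nhds (|deriv G u| * r0)) := by
        have hco : Continuous fun ε : ℝ => |deriv G u| * (r0 - ε) :=
          continuous_const.mul (continuous_const.sub continuous_id)
        have h6 := (hco.tendsto 0).mono_left (nhdsWithin_le_nhds (s := Ioi (0:ℝ)))
        simpa using h6
      apply le_of_tendsto htend
      filter_upwards [Ioo_mem_nhdsGT_of_mem (left_mem_Ico.2 ha)] with ε hε using hstep ε hε
    have hfinal : |deriv G u| ≤ (max a r0)⁻¹ * ‖deriv γc u‖ := by
      rw [max_eq_right hra]
      rw [← le_div_iff₀ hr0pos] at hreal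
      rw [div_eq_inv_mul] at hreal
      exact hreal
    calc ENNReal.ofReal |deriv G u|
        ≤ ENNReal.ofReal ((max a r0)⁻¹ * ‖deriv γc u‖) := ENNReal.ofReal_le_ofReal hfinal
      _ = ENNReal.ofReal ((max a r0)⁻¹) * ENNReal.ofReal ‖deriv γc u‖ :=
          ENNReal.ofReal_mul (inv_nonneg.2 (le_max_of_le_left ha.le))
  -- assemble
  have hchain1 : ∫⁻ u in sSet, ENNReal.ofReal |deriv G u| ≤
      ∫⁻ u in sSet,
        ENNReal.ofReal ((closedBall p b).indicator (fun z => (max a ‖z - p‖)⁻¹) (γc u)) *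
          ENNReal.ofReal ‖deriv γc u‖ := setLIntegral_mono' hsMeas hpt
  have hchain2 : ∫⁻ u in sSet,
        ENNReal.ofReal ((closedBall p b).indicator (fun z => (max a ‖z - p‖)⁻¹) (γc u)) *
          ENNReal.ofReal ‖deriv γc u‖ ≤
      ∫⁻ u in Ioo (0:ℝ) 1,
        ENNReal.ofReal ((closedBall p b).indicator (fun z => (max a ‖z - p‖)⁻¹) (γc u)) *
          ENNReal.ofReal ‖deriv γc u‖ := by
    apply lintegral_mono_set
    refine subset_trans inter_subset_left ?_
    exact Ioo_subset_Ioo (le_min hs.1 ht.1) (max_le hs.2 ht.2)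
  have hIoo : ∫⁻ u in Ioo (0:ℝ) 1,
        ENNReal.ofReal ((closedBall p b).indicator (fun z => (max a ‖z - p‖)⁻¹) (γc u)) *
          ENNReal.ofReal ‖deriv γc u‖ =
      ∫⁻ u in Ioo (0:ℝ) 1,
        ENNReal.ofReal ((closedBall p b).indicator (fun z => (max a ‖z - p‖)⁻¹) (γ u)) *
          ENNReal.ofReal ‖deriv γ u‖ := by
    refine lintegral_congr_ae ((ae_restrict_iff' measurableSet_Ioo).2
      (Filter.Eventually.of_forall ?_))
    intro u hu
    have h1 : γc u = γ u := hγc_eq u (Ioo_subset_Icc_self hu)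
    have h2 : deriv γc u = deriv γ u := by
      apply Filter.EventuallyEq.deriv_eq
      filter_upwards [Icc_mem_nhds hu.1 hu.2] with v hv using hγc_eq v hv
    simp only [h1, h2]
  have hIccIoo : ∫⁻ u in Icc (0:ℝ) 1,
        ENNReal.ofReal ((closedBall p b).indicator (fun z => (max a ‖z - p‖)⁻¹) (γ u)) *
          ENNReal.ofReal ‖deriv γ u‖ =
      ∫⁻ u in Ioo (0:ℝ) 1,
        ENNReal.ofReal ((closedBall p b).indicator (fun z => (max a ‖z - p‖)⁻¹) (γ u)) *
          ENNReal.ofReal ‖deriv γ u‖ := by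
    rw [Measure.restrict_congr_set (Ioo_ae_eq_Icc (μ := volume) (a := (0:ℝ)) (b := 1))]
  calc ENNReal.ofReal (Real.log (b / a)) ≤ volume (G '' sSet) := hgood
    _ ≤ ∫⁻ u in sSet, ENNReal.ofReal |deriv G u| := hjac
    _ ≤ _ := hchain1
    _ ≤ _ := hchain2
    _ = _ := hIoo
    _ = _ := hIccIoo.symm

set_option maxHeartbeats 1000000 in
/-- For every `m > 0` there is an `ε > 0`, depending only on `m`, so that whenever
`e, f` are disjoint Jordan arcs and the modulus of the family of closed curves
separating them is at least `m`, we have `dist(e,f) ≥ ε · min(diam e, diam f)`. -/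
theorem statement0 (m : ℝ) (hm : 0 < m) :
    ∃ ε : ℝ, 0 < ε ∧
      ∀ e f : Set ℂ, JordanArc e → JordanArc f → Disjoint e f →
        ENNReal.ofReal m ≤ modulus (ClosedCurveSeparating e f) →
        ε * min (Metric.diam e) (Metric.diam f) ≤ setDist e f := by
  classical
  obtain ⟨n0, hn0⟩ := exists_nat_gt (4 * Real.pi / ((Real.log 2) ^ 2 * m))
  set N : ℕ := n0 + 1 with hNdef
  have hlog2 : (0:ℝ) < Real.log 2 := Real.log_pos one_lt_two
  have hπ : (0:ℝ) < Real.pi := Real.pi_pos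
  have hNpos : (0:ℝ) < (N:ℝ) := by positivity
  have hNbig : 4 * Real.pi / ((Real.log 2) ^ 2 * m) < (N:ℝ) := by
    have : (n0:ℝ) ≤ (N:ℝ) := by exact_mod_cast Nat.le_succ n0
    linarith
  refine ⟨1 / 2 ^ (N + 3), by positivity, ?_⟩
  intro e f he hf _hdisj hmod
  set D := min (Metric.diam e) (Metric.diam f) with hDdef
  obtain ⟨φe, hφe1, -, hφe3⟩ := he
  obtain ⟨φf, hφf1, -, hφf3⟩ := hf
  have heNe : e.Nonempty := by
    rw [hφe3]; exact (nonempty_Icc.2 zero_le_one).image φe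
  have hfNe : f.Nonempty := by
    rw [hφf3]; exact (nonempty_Icc.2 zero_le_one).image φf
  have hd0 : 0 ≤ setDist e f := by
    apply Real.sInf_nonneg
    rintro r ⟨u, hu, v, hv, rfl⟩
    exact dist_nonneg
  by_contra hcon
  push_neg at hcon
  have hD0 : 0 < D := by
    by_contra hD
    push_neg at hD
    have h1 : (1:ℝ) / 2 ^ (N + 3) * D ≤ 0 :=
      mul_nonpos_of_nonneg_of_nonpos (by positivity) hD
    linarith
  set a := D / 2 ^ (N + 3) with hadef
  set b := D / 8 with hbdef
  have ha : 0 < a := by positivity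
  have hb8 : 0 < b := by positivity
  have haD : (1:ℝ) / 2 ^ (N + 3) * D = a := by rw [hadef]; ring
  have h16 : (8:ℝ) ≤ 2 ^ (N + 3) := by
    calc (8:ℝ) = 2 ^ 3 := by norm_num
      _ ≤ 2 ^ (N + 3) := by
        apply pow_le_pow_right₀ one_le_two
        omega
  have hab : a ≤ b := by
    rw [hadef, hbdef]
    exact div_le_div_of_nonneg_left hD0.le (by norm_num) h16
  have hba : b / a = 2 ^ N := by
    rw [hadef, hbdef]
    rw [div_div_div_eq]
    rw [pow_add]
    field_simp
    ring
  have hbNa : b = 2 ^ N * a := by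
    rw [div_eq_iff ha.ne'] at hba
    exact hba
  set L := Real.log (b / a) with hLdef
  have hL : 0 < L := by
    rw [hLdef, hba]
    apply Real.log_pos
    exact one_lt_pow₀ one_lt_two (by omega)
  have hLN : L = (N:ℝ) * Real.log 2 := by
    rw [hLdef, hba, Real.log_pow]
  -- pick near points x, y
  have hset : (Set.image2 dist e f).Nonempty :=
    ⟨_, mem_image2_of_mem heNe.some_mem hfNe.some_mem⟩
  have hlt : sInf (Set.image2 dist e f) < a := by
    rw [← haD]; exact hcon
  obtain ⟨r, hrmem, hr⟩ := exists_lt_of_csInf_lt hset hlt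
  obtain ⟨x, hx, y, hy, rfl⟩ := hrmem
  -- far points
  obtain ⟨u0, hu0e, hu0far⟩ := farPoint hD0 hx (min_le_left _ _)
  obtain ⟨v0, hv0f, hv0far⟩ := farPoint hD0 hy (min_le_right _ _)
  have hu0b : b ≤ dist u0 x := by
    rw [hbdef]; linarith
  have hv0b : b ≤ dist v0 x := by
    have htri : dist v0 y ≤ dist v0 x + dist x y := dist_triangle v0 x y
    have haD8 : a ≤ D / 8 := by rw [← hbdef]; exact hab
    rw [hbdef]
    linarith
  -- the test function
  set ρ : ℂ → ℝ≥0∞ := fun z => (ENNReal.ofReal L)⁻¹ *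
      ENNReal.ofReal ((closedBall x b).indicator (fun z => (max a ‖z - x‖)⁻¹) z) with hρdef
  have hLne0 : ENNReal.ofReal L ≠ 0 := by
    simp [ENNReal.ofReal_eq_zero, not_le, hL]
  have hLinvne : (ENNReal.ofReal L)⁻¹ ≠ ⊤ := by
    simp [ENNReal.inv_ne_top, hLne0]
  have hρmeas : Measurable ρ := by
    apply Measurable.const_mul
    apply ENNReal.measurable_ofReal.comp
    apply Measurable.indicator _ measurableSet_closedBall
    apply Continuous.measurable
    apply Continuous.inv₀
    · exact continuous_const.max ((continuous_id.sub continuous_const).norm)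
    · intro z; exact ne_of_gt (lt_max_of_lt_left ha)
  -- admissibility
  have hadm : Admissible ρ (ClosedCurveSeparating e f) := by
    refine ⟨hρmeas, ?_⟩
    rintro γ ⟨⟨K, hK⟩, _hcl, hsub, hsep⟩
    have hseg : ∃ s ∈ Icc (0:ℝ) 1, γ s ∈ segment ℝ x y := by
      by_contra hno
      push_neg at hno
      have hsub2 : segment ℝ x y ⊆ (γ '' Icc 0 1)ᶜ := by
        intro z hz
        rintro ⟨s, hsmem, rfl⟩
        exact hno s hsmem hz
      exact hsep x hx y hy (ccIn_eq_of_mem (convex_segment x y).isPreconnected hsub2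
        (left_mem_segment ℝ x y) (right_mem_segment ℝ x y))
    obtain ⟨s, hsI, hsseg⟩ := hseg
    have hsa : ‖γ s - x‖ ≤ a := by
      have h1 : γ s ∈ closedBall x (dist x y) := by
        apply (convex_closedBall x (dist x y)).segment_subset ?_ ?_ hsseg
        · exact mem_closedBall_self dist_nonneg
        · simp only [mem_closedBall, dist_comm]
          exact le_rfl
      rw [← dist_eq_norm]
      exact le_trans (mem_closedBall.1 h1) hr.le
    have hfar : ∃ t ∈ Icc (0:ℝ) 1, b ≤ ‖γ t - x‖ := by
      by_contra hno
      push_neg at hno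
      have himgball : γ '' Icc 0 1 ⊆ ball x b := by
        rintro _ ⟨t', ht', rfl⟩
        rw [mem_ball, dist_eq_norm]
        exact hno t' ht'
      have hCsub : (ball x b)ᶜ ⊆ (γ '' Icc 0 1)ᶜ := compl_subset_compl.2 himgball
      have hu0mem : u0 ∈ (ball x b)ᶜ := by
        simp only [mem_compl_iff, mem_ball, not_lt]
        exact hu0b
      have hv0mem : v0 ∈ (ball x b)ᶜ := by
        simp only [mem_compl_iff, mem_ball, not_lt]
        exact hv0b
      exact hsep u0 hu0e v0 hv0f
        (ccIn_eq_of_mem (outerPreconnected x hb8) hCsub hu0mem hv0mem)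
    obtain ⟨t, htI, htb⟩ := hfar
    have hcross := crossing hK x ha hab hsI htI hsa htb
    show (1:ℝ≥0∞) ≤ lineIntegral ρ γ
    have heq : lineIntegral ρ γ = (ENNReal.ofReal L)⁻¹ *
        ∫⁻ u in Icc (0:ℝ) 1,
          ENNReal.ofReal ((closedBall x b).indicator (fun z => (max a ‖z - x‖)⁻¹) (γ u)) *
            ENNReal.ofReal ‖deriv γ u‖ := by
      rw [lineIntegral, ← lintegral_const_mul' _ _ hLinvne]
      apply lintegral_congr
      intro u
      rw [hρdef]
      ring
    rw [heq]
    calc (1:ℝ≥0∞) = (ENNReal.ofReal L)⁻¹ * ENNReal.ofReal L :=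
          (ENNReal.inv_mul_cancel hLne0 ENNReal.ofReal_ne_top).symm
      _ ≤ _ := mul_le_mul_right hcross _
  -- modulus bound
  have hbound : modulus (ClosedCurveSeparating e f) ≤ ∫⁻ z : ℂ, ρ z ^ 2 := by
    apply iInf_le_of_le ρ
    exact iInf_le _ hadm
  -- value estimate
  have hval : ∫⁻ z : ℂ, ρ z ^ 2 < ENNReal.ofReal m := by
    have hptwise : ∀ z : ℂ,
        (ENNReal.ofReal ((closedBall x b).indicator (fun z => (max a ‖z - x‖)⁻¹) z)) ^ 2 ≤
        ∑ k ∈ Finset.range N, (closedBall x (2 ^ (k+1) * a)).indicator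
          (fun _ => ENNReal.ofReal ((2 ^ k * a)⁻¹) ^ 2) z := by
      intro z
      by_cases hzb : z ∈ closedBall x b
      · set r0 := ‖z - x‖ with hr0def
        have hr0b : r0 ≤ b := by
          rw [hr0def, ← dist_eq_norm]; exact mem_closedBall.1 hzb
        have key : ∃ j, j < N ∧ z ∈ closedBall x (2 ^ (j+1) * a) ∧
            (max a r0)⁻¹ ≤ (2 ^ j * a)⁻¹ := by
          by_cases hr2a : r0 ≤ 2 * a
          · refine ⟨0, by omega, ?_, ?_⟩
            · rw [mem_closedBall, dist_eq_norm, ← hr0def]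
              calc r0 ≤ 2 * a := hr2a
                _ = 2 ^ (0+1) * a := by norm_num
            · have h1 : a ≤ max a r0 := le_max_left _ _
              have h2 : (2:ℝ) ^ (0:ℕ) * a = a := by norm_num
              rw [h2]
              exact inv_anti₀ ha h1
          · push_neg at hr2a
            set P : ℕ → Prop := fun k => 2 ^ k * a < r0 with hPdef
            have hP1 : P 1 := by rw [hPdef]; simpa using hr2a
            have hN1 : 1 ≤ N := by omega
            set j := Nat.findGreatest P N with hjdef
            have hPj : P j := Nat.findGreatest_spec hN1 hP1
            have hjleN : j ≤ N := Nat.findGreatest_le N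
            have hjne : j ≠ N := by
              intro hjN
              rw [hPdef] at hPj
              rw [hjN] at hPj
              rw [hbNa] at hr0b
              linarith
            have hjgt : ¬ P (j + 1) :=
              Nat.findGreatest_is_greatest (P := P) (n := N) (k := j + 1)
                (by omega) (by omega)
            simp only [hPdef] at hPj hjgt
            push_neg at hjgt
            refine ⟨j, by omega, ?_, ?_⟩
            · rw [mem_closedBall, dist_eq_norm, ← hr0def]
              exact hjgt
            · have har0 : a ≤ r0 := by nlinarith
              rw [max_eq_right har0]
              apply inv_anti₀ (by positivity) hPj.le
        obtain ⟨j, hjN, hjmem, hjle⟩ := key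
        have hterm : (ENNReal.ofReal ((closedBall x b).indicator
            (fun z => (max a ‖z - x‖)⁻¹) z)) ^ 2 ≤
            (closedBall x (2 ^ (j+1) * a)).indicator
              (fun _ => ENNReal.ofReal ((2 ^ j * a)⁻¹) ^ 2) z := by
          rw [indicator_of_mem hzb, indicator_of_mem hjmem]
          have h1 : ENNReal.ofReal ((max a ‖z - x‖)⁻¹) ≤ ENNReal.ofReal ((2 ^ j * a)⁻¹) :=
            ENNReal.ofReal_le_ofReal hjle
          rw [pow_two, pow_two]
          exact mul_le_mul' h1 h1
        refine hterm.trans ?_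
        exact Finset.single_le_sum (f := fun k => (closedBall x (2 ^ (k+1) * a)).indicator
          (fun _ => ENNReal.ofReal ((2 ^ k * a)⁻¹) ^ 2) z)
          (fun i _ => zero_le) (Finset.mem_range.2 hjN)
      · rw [indicator_of_notMem hzb]
        simp
    have hsum : ∫⁻ z : ℂ,
        (ENNReal.ofReal ((closedBall x b).indicator (fun z => (max a ‖z - x‖)⁻¹) z)) ^ 2 ≤
        (N : ℝ≥0∞) * (ENNReal.ofReal 2 ^ 2 * (NNReal.pi : ℝ≥0∞)) := by
      calc ∫⁻ z : ℂ, (ENNReal.ofReal ((closedBall x b).indicator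
            (fun z => (max a ‖z - x‖)⁻¹) z)) ^ 2
          ≤ ∫⁻ z : ℂ, ∑ k ∈ Finset.range N, (closedBall x (2 ^ (k+1) * a)).indicator
            (fun _ => ENNReal.ofReal ((2 ^ k * a)⁻¹) ^ 2) z := lintegral_mono hptwise
        _ = ∑ k ∈ Finset.range N, ∫⁻ z : ℂ, (closedBall x (2 ^ (k+1) * a)).indicator
            (fun _ => ENNReal.ofReal ((2 ^ k * a)⁻¹) ^ 2) z := by
            apply lintegral_finset_sum'
            intro k _
            exact (measurable_const.indicator measurableSet_closedBall).aemeasurable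
        _ = ∑ k ∈ Finset.range N, ENNReal.ofReal ((2 ^ k * a)⁻¹) ^ 2 *
            volume (closedBall x (2 ^ (k+1) * a)) := by
            apply Finset.sum_congr rfl
            intro k _
            exact lintegral_indicator_const measurableSet_closedBall _
        _ = ∑ k ∈ Finset.range N, ENNReal.ofReal 2 ^ 2 * (NNReal.pi : ℝ≥0∞) := by
            apply Finset.sum_congr rfl
            intro k _
            rw [Complex.volume_closedBall]
            rw [← mul_assoc]
            congr 1
            rw [← ENNReal.ofReal_pow (by positivity), ← ENNReal.ofReal_pow (by positivity),
              ← ENNReal.ofReal_mul (by positivity), ← ENNReal.ofReal_pow (by norm_num)]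
            congr 1
            have h2k : (0:ℝ) < 2 ^ k * a := by positivity
            field_simp
            ring
        _ = (N : ℝ≥0∞) * (ENNReal.ofReal 2 ^ 2 * (NNReal.pi : ℝ≥0∞)) := by
            rw [Finset.sum_const, Finset.card_range, nsmul_eq_mul]
    have hρsq : ∫⁻ z : ℂ, ρ z ^ 2 ≤ ((ENNReal.ofReal L)⁻¹) ^ 2 *
        ((N : ℝ≥0∞) * (ENNReal.ofReal 2 ^ 2 * (NNReal.pi : ℝ≥0∞))) := by
      have heq2 : ∀ z : ℂ, ρ z ^ 2 = ((ENNReal.ofReal L)⁻¹) ^ 2 *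
          (ENNReal.ofReal ((closedBall x b).indicator (fun z => (max a ‖z - x‖)⁻¹) z)) ^ 2 := by
        intro z
        rw [hρdef]
        ring
      calc ∫⁻ z : ℂ, ρ z ^ 2
          = ∫⁻ z : ℂ, ((ENNReal.ofReal L)⁻¹) ^ 2 *
            (ENNReal.ofReal ((closedBall x b).indicator (fun z => (max a ‖z - x‖)⁻¹) z)) ^ 2 :=
            lintegral_congr heq2
        _ = ((ENNReal.ofReal L)⁻¹) ^ 2 * ∫⁻ z : ℂ,
            (ENNReal.ofReal ((closedBall x b).indicator (fun z => (max a ‖z - x‖)⁻¹) z)) ^ 2 :=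
            lintegral_const_mul' _ _ (ENNReal.pow_ne_top hLinvne)
        _ ≤ _ := mul_le_mul_right hsum _
    refine lt_of_le_of_lt hρsq ?_
    have hconv : ((ENNReal.ofReal L)⁻¹) ^ 2 *
        ((N : ℝ≥0∞) * (ENNReal.ofReal 2 ^ 2 * (NNReal.pi : ℝ≥0∞))) =
        ENNReal.ofReal ((L⁻¹) ^ 2 * ((N:ℝ) * (2 ^ 2 * Real.pi))) := by
      rw [← ENNReal.ofReal_inv_of_pos hL]
      have hπeq : (NNReal.pi : ℝ≥0∞) = ENNReal.ofReal Real.pi := by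
        rw [← NNReal.coe_real_pi, ENNReal.ofReal_coe_nnreal]
      rw [hπeq, ← ENNReal.ofReal_natCast N]
      rw [← ENNReal.ofReal_pow (by positivity), ← ENNReal.ofReal_pow (by norm_num),
        ← ENNReal.ofReal_mul (by positivity), ← ENNReal.ofReal_mul (by positivity),
        ← ENNReal.ofReal_mul (by positivity)]
    rw [hconv]
    rw [ENNReal.ofReal_lt_ofReal_iff hm]
    have hLval : (L⁻¹) ^ 2 * ((N:ℝ) * (2 ^ 2 * Real.pi)) =
        4 * Real.pi / ((N:ℝ) * (Real.log 2) ^ 2) := by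
      rw [hLN]
      field_simp
      ring
    rw [hLval]
    rw [div_lt_iff₀ (by positivity)]
    rw [div_lt_iff₀ (by positivity)] at hNbig
    nlinarith
  have : ENNReal.ofReal m < ENNReal.ofReal m :=
    lt_of_le_of_lt (hmod.trans hbound) hval
  exact absurd this (lt_irrefl _)
end
end

section
/- Let K = (−∞, −1] ⊂ ℝ and let J = [a, b] with 1 ≤ a < b. If the modulus M(J, K) of the family of curves in the upper half-plane separating J from K satisfies M(J, K) ≤ M for some M < ∞, then b ≥ (1 + e^{−2πM}) · a. -/
open MeasureTheory Set Metric
open scoped ENNReal NNReal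

noncomputable section

/-- The open upper half-plane. -/
def HU : Set ℂ := {z : ℂ | 0 < z.im}

/-- A rectifiable curve in the upper half-plane with both endpoints on the real line. -/
def HPCurve (γ : ℝ → ℂ) : Prop :=
  RectCurve γ ∧ (∀ t ∈ Ioo (0:ℝ) 1, γ t ∈ HU) ∧ (γ 0).im = 0 ∧ (γ 1).im = 0

/-- The set `img` separates `A` from `B` in the upper half-plane: no connected
component of `ℍ_u \ img` has both a point of `A` and a point of `B` in its closure. -/
def SeparatesHP (img : Set ℂ) (A B : Set ℝ) : Prop :=
  ∀ a ∈ A, ∀ b ∈ B, ∀ z ∈ HU \ img,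
    ¬ (((a : ℝ) : ℂ) ∈ closure (connectedComponentIn (HU \ img) z) ∧
       ((b : ℝ) : ℂ) ∈ closure (connectedComponentIn (HU \ img) z))

/-- The family of rectifiable curves in the upper half-plane, with both endpoints
in `ℝ \ (A ∪ B)`, separating `A` from `B`. -/
def HPFamily (A B : Set ℝ) : Set (ℝ → ℂ) :=
  {γ | HPCurve γ ∧ (γ 0).re ∉ A ∪ B ∧ (γ 1).re ∉ A ∪ B ∧
       SeparatesHP (γ '' Icc 0 1) A B}

/-- The modulus `M(A,B)` of the family of curves in the upper half-plane
separating `A` from `B`. -/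
def MHP (A B : Set ℝ) : ℝ≥0∞ := modulus (HPFamily A B)

open Complex
open scoped Real

-- the test curve
def sepCurve (c s : ℝ) (t : ℝ) : ℂ := circleMap (c:ℂ) s (π * t)

lemma sepCurve_hasDerivAt (c s t : ℝ) :
    HasDerivAt (sepCurve c s) (π • (circleMap 0 s (π * t) * Complex.I)) t := by
  have h1 : HasDerivAt (fun t : ℝ => π * t) π t := by
    simpa using (hasDerivAt_id t).const_mul π
  exact (hasDerivAt_circleMap (c:ℂ) s (π * t)).scomp t h1

lemma sepCurve_deriv (c s t : ℝ) :
    deriv (sepCurve c s) t = π • (circleMap 0 s (π * t) * Complex.I) :=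
  (sepCurve_hasDerivAt c s t).deriv

lemma norm_sepCurve_deriv (c s t : ℝ) (hs : 0 < s) : ‖deriv (sepCurve c s) t‖ = π * s := by
  rw [sepCurve_deriv]
  simp [norm_smul, norm_circleMap_zero, abs_of_pos hs, abs_of_pos Real.pi_pos]

lemma sepCurve_im (c s t : ℝ) : (sepCurve c s t).im = s * Real.sin (π * t) := by
  simp only [sepCurve, circleMap, Complex.add_im, Complex.ofReal_im, Complex.mul_im,
    Complex.ofReal_re, zero_add]
  rw [Complex.exp_ofReal_mul_I_im, Complex.exp_ofReal_mul_I_re]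
  simp

lemma sepCurve_zero (c s : ℝ) : sepCurve c s 0 = ((c + s : ℝ) : ℂ) := by
  simp only [sepCurve, mul_zero, circleMap]
  push_cast
  simp

lemma sepCurve_one (c s : ℝ) : sepCurve c s 1 = ((c - s : ℝ) : ℂ) := by
  simp only [sepCurve, mul_one, circleMap]
  rw [show ((π : ℝ) : ℂ) * Complex.I = (π : ℂ) * Complex.I from rfl, Complex.exp_pi_mul_I]
  push_cast
  ring

-- half circle in image
lemma sphere_inter_HU_subset (c s : ℝ) (hs : 0 < s) :
    HU ∩ sphere (c:ℂ) s ⊆ sepCurve c s '' Icc 0 1 := by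
  rintro z ⟨hz, hzs⟩
  have him : 0 < (z - c).im := by simpa [HU, Complex.sub_im] using hz
  have habs : ‖z - c‖ = s := by
    rw [← Complex.dist_eq]; exact hzs
  have harg0 : 0 < Complex.arg (z - c) := by
    rcases lt_or_eq_of_le (Complex.arg_nonneg_iff.mpr him.le) with h | h
    · exact h
    · exfalso
      have := (Complex.arg_eq_zero_iff.mp h.symm).2
      exact him.ne' (by simpa using this)
  have hargpi : Complex.arg (z - c) < π := by
    rcases lt_or_eq_of_le (Complex.arg_le_pi (z - c)) with h | h
    · exact h
    · exfalso
      exact him.ne' (by simpa using (Complex.arg_eq_pi_iff.mp h).2)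
  refine ⟨Complex.arg (z - c) / π, ⟨by positivity, by
    rw [div_le_one Real.pi_pos]; exact hargpi.le⟩, ?_⟩
  have hπ : π * (Complex.arg (z - c) / π) = Complex.arg (z - c) := by
    field_simp
  rw [sepCurve, hπ, circleMap]
  rw [← habs]
  rw [Complex.norm_mul_exp_arg_mul_I (z - c)]
  ring

lemma sepCurve_mem_HPFamily (a b s : ℝ) (ha : 1 ≤ a) (hab : a < b)
    (hs0 : (b - a) / 2 < s) (hs1 : s < (a + b) / 2 + 1) :
    sepCurve ((a + b) / 2) s ∈ HPFamily (Icc a b) (Iic (-1)) := by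
  set c : ℝ := (a + b) / 2 with hc
  have hspos : 0 < s := lt_of_le_of_lt (by linarith) hs0
  refine ⟨⟨?_, ?_, ?_, ?_⟩, ?_, ?_, ?_⟩
  · -- RectCurve
    refine ⟨Real.nnabs s * Real.nnabs π, ?_⟩
    have lipπ : LipschitzWith (Real.nnabs π) (fun t : ℝ => π * t) := by
      refine LipschitzWith.of_dist_le_mul fun x y => ?_
      rw [Real.dist_eq, Real.dist_eq, ← mul_sub, abs_mul]
      simp [Real.coe_nnabs]
    exact ((lipschitzWith_circleMap (c:ℂ) s).comp lipπ).lipschitzOnWith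
  · -- interior in HU
    intro t ht
    have : 0 < Real.sin (π * t) := by
      apply Real.sin_pos_of_pos_of_lt_pi (mul_pos Real.pi_pos ht.1)
      nlinarith [Real.pi_pos, ht.2]
    simp only [HU, mem_setOf_eq, sepCurve_im]
    positivity
  · rw [sepCurve_zero]; simp
  · rw [sepCurve_one]; simp
  · rw [sepCurve_zero]
    simp only [Complex.ofReal_re, mem_union, mem_Icc, mem_Iic, not_or, not_and, not_le]
    constructor
    · intro _; linarith
    · linarith
  · rw [sepCurve_one]
    simp only [Complex.ofReal_re, mem_union, mem_Icc, mem_Iic, not_or, not_and, not_le]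
    constructor
    · intro h; linarith
    · linarith
  · -- separation
    intro x hx y hy z hz ⟨hpx, hpy⟩
    set C : Set ℂ := HU \ sepCurve c s '' Icc 0 1 with hC
    have hsub : C ⊆ ball (c:ℂ) s ∪ (closedBall (c:ℂ) s)ᶜ := by
      rintro w ⟨hw1, hw2⟩
      rcases lt_trichotomy (dist w (c:ℂ)) s with h | h | h
      · exact Or.inl (mem_ball.mpr h)
      · exact absurd (sphere_inter_HU_subset c s hspos ⟨hw1, mem_sphere.mpr h⟩) hw2
      · exact Or.inr fun hmem => absurd (mem_closedBall.mp hmem) (not_le.mpr h)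
    have hconn : IsPreconnected (connectedComponentIn C z) := isPreconnected_connectedComponentIn
    have hccsub : connectedComponentIn C z ⊆ C := connectedComponentIn_subset C z
    rcases hconn.subset_or_subset isOpen_ball (isOpen_compl_iff.mpr isClosed_closedBall)
        (disjoint_compl_right.mono_left ball_subset_closedBall)
        (hccsub.trans hsub) with h | h
    · -- inside the ball: y (in K) cannot be in the closure
      have hclo : closure (connectedComponentIn C z) ⊆ closedBall (c:ℂ) s :=
        closure_minimal (h.trans ball_subset_closedBall) isClosed_closedBall
      have hdist : dist ((y:ℝ):ℂ) ((c:ℝ):ℂ) ≤ s := mem_closedBall.mp (hclo hpy)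
      rw [Complex.isometry_ofReal.dist_eq, Real.dist_eq] at hdist
      have h1 : c - y ≤ |y - c| := by rw [abs_sub_comm]; exact le_abs_self _
      have h2 : y ≤ -1 := hy
      linarith
    · -- outside: x (in J) cannot be in the closure
      have hcl : closure (connectedComponentIn C z) ⊆ (ball (c:ℂ) s)ᶜ :=
        closure_minimal (h.trans (compl_subset_compl.mpr ball_subset_closedBall))
          (isClosed_compl_iff.mpr isOpen_ball)
      have : ((x:ℝ):ℂ) ∉ ball (c:ℂ) s := hcl hpx
      rw [mem_ball] at this
      have hdist : dist ((x:ℝ):ℂ) ((c:ℝ):ℂ) < s := by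
        rw [Complex.isometry_ofReal.dist_eq, Real.dist_eq, abs_sub_lt_iff]
        rcases hx with ⟨hx1, hx2⟩
        constructor <;> [skip; skip] <;> simp only [hc] <;> linarith
      exact this hdist

lemma sepCurve_continuous (c s : ℝ) : Continuous (sepCurve c s) := by
  unfold sepCurve circleMap
  fun_prop

lemma admissible_line_bound (a b s : ℝ) (ha : 1 ≤ a) (hab : a < b)
    (hs0 : (b - a) / 2 < s) (hs1 : s < (a + b) / 2 + 1)
    {ρ : ℂ → ℝ≥0∞} (hAdm : Admissible ρ (HPFamily (Icc a b) (Iic (-1)))) :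
    ENNReal.ofReal ((π * s)⁻¹) ≤ ∫⁻ t in Icc (0:ℝ) 1, ρ (sepCurve ((a+b)/2) s t) := by
  set c : ℝ := (a + b) / 2 with hc
  have hspos : 0 < s := lt_of_le_of_lt (by linarith) hs0
  have h1 : (1:ℝ≥0∞) ≤ lineIntegral ρ (sepCurve c s) :=
    hAdm.2 _ (sepCurve_mem_HPFamily a b s ha hab hs0 hs1)
  have hmeas : AEMeasurable (fun t => ρ (sepCurve c s t))
      (volume.restrict (Icc (0:ℝ) 1)) :=
    (hAdm.1.comp (sepCurve_continuous c s).measurable).aemeasurable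
  have h2 : lineIntegral ρ (sepCurve c s)
      = (∫⁻ t in Icc (0:ℝ) 1, ρ (sepCurve c s t)) * ENNReal.ofReal (π * s) := by
    rw [lineIntegral, ← lintegral_mul_const'' _ hmeas]
    apply lintegral_congr fun t => ?_
    rw [norm_sepCurve_deriv c s t hspos]
  rw [h2] at h1
  have hne0 : ENNReal.ofReal (π * s) ≠ 0 := by
    simp [ENNReal.ofReal_eq_zero, not_le]
    positivity
  rw [ENNReal.ofReal_inv_of_pos (by positivity : (0:ℝ) < π * s), ← one_div,
    ENNReal.div_le_iff_le_mul (Or.inl hne0) (Or.inl ENNReal.ofReal_ne_top)]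
  exact h1

lemma admissible_sq_bound (a b s : ℝ) (ha : 1 ≤ a) (hab : a < b)
    (hs0 : (b - a) / 2 < s) (hs1 : s < (a + b) / 2 + 1)
    {ρ : ℂ → ℝ≥0∞} (hAdm : Admissible ρ (HPFamily (Icc a b) (Iic (-1)))) :
    ENNReal.ofReal ((π * s)⁻¹) ^ 2 ≤ ∫⁻ t in Icc (0:ℝ) 1, ρ (sepCurve ((a+b)/2) s t) ^ 2 := by
  set c : ℝ := (a + b) / 2 with hc
  set μ : Measure ℝ := volume.restrict (Icc (0:ℝ) 1) with hμ
  set f : ℝ → ℝ≥0∞ := fun t => ρ (sepCurve c s t) with hf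
  have hmeas : AEMeasurable f μ :=
    (hAdm.1.comp (sepCurve_continuous c s).measurable).aemeasurable
  have hconj : Real.HolderConjugate 2 2 := Real.HolderConjugate.two_two
  have hH := ENNReal.lintegral_mul_le_Lp_mul_Lq μ hconj hmeas aemeasurable_const (g := fun _ => 1)
  have hμuniv : μ univ = 1 := by
    rw [hμ, Measure.restrict_apply_univ, Real.volume_Icc]
    norm_num
  have hH2 : ∫⁻ t, f t ∂μ ≤ (∫⁻ t, f t ^ (2:ℝ) ∂μ) ^ (1/2 : ℝ) := by
    refine le_trans (le_of_eq ?_) (hH.trans (le_of_eq ?_))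
    · exact lintegral_congr fun t => by simp
    · rw [show ∫⁻ t, (fun _ : ℝ => (1:ℝ≥0∞)) t ^ (2:ℝ) ∂μ = 1 by simp [hμuniv]]
      simp
  have hbase := (admissible_line_bound a b s ha hab hs0 hs1 hAdm).trans hH2
  have hsq := ENNReal.rpow_le_rpow hbase (by norm_num : (0:ℝ) ≤ 2)
  rw [← ENNReal.rpow_mul] at hsq
  rw [show (1/2 : ℝ) * 2 = 1 by norm_num, ENNReal.rpow_one] at hsq
  calc ENNReal.ofReal ((π * s)⁻¹) ^ 2
      = ENNReal.ofReal ((π * s)⁻¹) ^ (2:ℝ) := by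
        rw [← ENNReal.rpow_natCast]; norm_num
    _ ≤ ∫⁻ t, f t ^ (2:ℝ) ∂μ := hsq
    _ = ∫⁻ t, f t ^ 2 ∂μ := by
        apply lintegral_congr fun t => ?_
        rw [← ENNReal.rpow_natCast]; norm_num

-- === change of variables part ===


abbrev Fmap (c : ℝ) (p : ℝ × ℝ) : ℝ × ℝ := (c + p.1 * Real.cos (π * p.2), p.1 * Real.sin (π * p.2))

lemma hasFDerivAt_Fmap (c : ℝ) (p : ℝ × ℝ) :
    HasFDerivAt (Fmap c)
      (LinearMap.toContinuousLinearMap (Matrix.toLin (Module.Basis.finTwoProd ℝ) (Module.Basis.finTwoProd ℝ)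
        !![Real.cos (π * p.2), -p.1 * (π * Real.sin (π * p.2));
           Real.sin (π * p.2), p.1 * (π * Real.cos (π * p.2))])) p := by
  rw [Matrix.toLin_finTwoProd_toContinuousLinearMap]
  have hc : HasFDerivAt (fun p : ℝ × ℝ => Real.cos (π * p.2))
      ((-(π * Real.sin (π * p.2))) • (ContinuousLinearMap.snd ℝ ℝ ℝ)) p := by
    have h1 : HasFDerivAt (fun p : ℝ × ℝ => π * p.2) (π • (ContinuousLinearMap.snd ℝ ℝ ℝ)) p := by
      exact (hasFDerivAt_snd (p := p)).const_mul π
    have := (Real.hasDerivAt_cos (π * p.2)).comp_hasFDerivAt p h1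
    refine this.congr_fderiv ?_
    refine ContinuousLinearMap.ext fun v => ?_
    simp [ContinuousLinearMap.comp_apply]
    ring
  have hs : HasFDerivAt (fun p : ℝ × ℝ => Real.sin (π * p.2))
      ((π * Real.cos (π * p.2)) • (ContinuousLinearMap.snd ℝ ℝ ℝ)) p := by
    have h1 : HasFDerivAt (fun p : ℝ × ℝ => π * p.2) (π • (ContinuousLinearMap.snd ℝ ℝ ℝ)) p := by
      exact (hasFDerivAt_snd (p := p)).const_mul π
    have := (Real.hasDerivAt_sin (π * p.2)).comp_hasFDerivAt p h1
    refine this.congr_fderiv ?_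
    refine ContinuousLinearMap.ext fun v => ?_
    simp [ContinuousLinearMap.comp_apply]
    ring
  have h2 : HasFDerivAt (fun q : ℝ × ℝ => q.1 * Real.cos (π * q.2))
      (Real.cos (π * p.2) • (ContinuousLinearMap.fst ℝ ℝ ℝ)
        + p.1 • ((-(π * Real.sin (π * p.2))) • (ContinuousLinearMap.snd ℝ ℝ ℝ))) p := by
    exact ((hasFDerivAt_fst (𝕜 := ℝ) (p := p)).mul hc).congr_fderiv (add_comm _ _)
  have h3 : HasFDerivAt (fun q : ℝ × ℝ => q.1 * Real.sin (π * q.2))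
      (Real.sin (π * p.2) • (ContinuousLinearMap.fst ℝ ℝ ℝ)
        + p.1 • ((π * Real.cos (π * p.2)) • (ContinuousLinearMap.snd ℝ ℝ ℝ))) p := by
    exact ((hasFDerivAt_fst (𝕜 := ℝ) (p := p)).mul hs).congr_fderiv (add_comm _ _)
  have := HasFDerivAt.prodMk ((hasFDerivAt_const c p).add h2) h3
  refine this.congr_fderiv ?_
  ext v <;> simp [Matrix.toLin_finTwoProd] <;> ring

lemma det_Fmap (p : ℝ × ℝ) :
    ((LinearMap.toContinuousLinearMap (Matrix.toLin (Module.Basis.finTwoProd ℝ) (Module.Basis.finTwoProd ℝ)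
        !![Real.cos (π * p.2), -p.1 * (π * Real.sin (π * p.2));
           Real.sin (π * p.2), p.1 * (π * Real.cos (π * p.2))])) : (ℝ×ℝ) →L[ℝ] (ℝ×ℝ)).det
      = π * p.1 := by
  have h := Real.sin_sq_add_cos_sq (π * p.2)
  simp only [LinearMap.det_toContinuousLinearMap, LinearMap.det_toLin, Matrix.det_fin_two_of]
  linear_combination (π * p.1) * h

lemma injOn_Fmap (c s₀ s₁ : ℝ) (h0 : 0 < s₀) :
    InjOn (Fmap c) (Ioo s₀ s₁ ×ˢ Ioo (0:ℝ) 1) := by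
  rintro ⟨x, t⟩ ⟨hx, ht⟩ ⟨x', t'⟩ ⟨hx', ht'⟩ h
  simp only [Fmap, Prod.mk.injEq, add_right_inj] at h
  simp only [mem_Ioo] at hx ht hx' ht'
  have hxp : 0 < x := h0.trans hx.1
  have hxp' : 0 < x' := h0.trans hx'.1
  have e1 : (x * Real.cos (π * t)) ^ 2 = (x' * Real.cos (π * t')) ^ 2 := by rw [h.1]
  have e2 : (x * Real.sin (π * t)) ^ 2 = (x' * Real.sin (π * t')) ^ 2 := by rw [h.2]
  have hsq : x ^ 2 = x' ^ 2 := by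
    linear_combination e1 + e2 - x ^ 2 * Real.sin_sq_add_cos_sq (π * t)
      + x' ^ 2 * Real.sin_sq_add_cos_sq (π * t')
  have hxx : x = x' := by
    have h3 : (x - x') * (x + x') = 0 := by linear_combination hsq
    rcases mul_eq_zero.mp h3 with h4 | h4
    · linarith
    · linarith
  subst hxx
  have hcos : Real.cos (π * t) = Real.cos (π * t') := mul_left_cancel₀ (ne_of_gt hxp) h.1
  have hππ : π * t = π * t' := by
    apply Real.injOn_cos ⟨(mul_pos Real.pi_pos ht.1).le, by nlinarith [Real.pi_pos, ht.2]⟩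
      ⟨(mul_pos Real.pi_pos ht'.1).le, by nlinarith [Real.pi_pos, ht'.2]⟩ hcos
  have htt : t = t' := mul_left_cancel₀ Real.pi_ne_zero hππ
  simp [htt]

lemma equivRealProd_symm_Fmap (c : ℝ) (p : ℝ × ℝ) :
    Complex.equivRealProd.symm (Fmap c p) = circleMap (c:ℂ) p.1 (π * p.2) := by
  simp only [Complex.equivRealProd_symm_apply, Fmap, circleMap, Complex.exp_mul_I]
  push_cast
  ring

lemma cov (c : ℝ) (ρ : ℂ → ℝ≥0∞) (hρ : Measurable ρ) (s₀ s₁ : ℝ) (h0 : 0 < s₀) :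
    ∫⁻ x in Ioo s₀ s₁, ∫⁻ t in Ioo (0:ℝ) 1,
        ENNReal.ofReal (π * x) * ρ (circleMap (c:ℂ) x (π * t)) ^ 2
      ≤ ∫⁻ z : ℂ, ρ z ^ 2 := by
  set G : ℝ × ℝ → ℝ≥0∞ := fun p => ρ (Complex.equivRealProd.symm p) ^ 2 with hG
  have hGm : Measurable G := by
    apply Measurable.pow_const
    exact hρ.comp Complex.equivRealProdCLM.symm.continuous.measurable
  set T : Set (ℝ × ℝ) := Ioo s₀ s₁ ×ˢ Ioo (0:ℝ) 1 with hT
  have hTm : MeasurableSet T := measurableSet_Ioo.prod measurableSet_Ioo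
  have key := lintegral_image_eq_lintegral_abs_det_fderiv_mul (volume : Measure (ℝ × ℝ)) hTm
    (f := Fmap c)
    (f' := fun p => LinearMap.toContinuousLinearMap (Matrix.toLin (Module.Basis.finTwoProd ℝ)
      (Module.Basis.finTwoProd ℝ)
        !![Real.cos (π * p.2), -p.1 * (π * Real.sin (π * p.2));
           Real.sin (π * p.2), p.1 * (π * Real.cos (π * p.2))]))
    (fun p _ => (hasFDerivAt_Fmap c p).hasFDerivWithinAt) (injOn_Fmap c s₀ s₁ h0) G
  have step1 : ∫⁻ p in T, ENNReal.ofReal (π * p.1) * ρ (circleMap (c:ℂ) p.1 (π * p.2)) ^ 2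
      ≤ ∫⁻ z : ℂ, ρ z ^ 2 := by
    have congr1 : ∫⁻ p in T, ENNReal.ofReal (π * p.1) * ρ (circleMap (c:ℂ) p.1 (π * p.2)) ^ 2
        = ∫⁻ p in T, ENNReal.ofReal |(π * p.1)| * G (Fmap c p) := by
      apply setLIntegral_congr_fun hTm
      intro p hp
      rw [hG]
      simp only [equivRealProd_symm_Fmap c p]
      rw [abs_of_pos (mul_pos Real.pi_pos (h0.trans hp.1.1))]
    rw [congr1]
    have congr2 : ∫⁻ p in T, ENNReal.ofReal |(π * p.1)| * G (Fmap c p)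
        = ∫⁻ p in Fmap c '' T, G p := by
      rw [key]
      apply setLIntegral_congr_fun hTm
      intro p hp
      beta_reduce
      rw [det_Fmap p]
    rw [congr2]
    have le1 : ∫⁻ p in Fmap c '' T, G p ≤ ∫⁻ p : ℝ × ℝ, G p :=
      lintegral_mono' Measure.restrict_le_self le_rfl
    refine le1.trans (le_of_eq ?_)
    have := (Complex.volume_preserving_equiv_real_prod).lintegral_comp hGm
    rw [← this]
    apply lintegral_congr fun z => ?_
    rw [hG]
    simp [Complex.measurableEquivRealProd, Complex.equivRealProd_symm_apply]
  refine le_trans (le_of_eq ?_) step1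
  rw [hT, Measure.volume_eq_prod, ← Measure.prod_restrict, lintegral_prod]
  apply Measurable.aemeasurable
  apply Measurable.mul
  · exact (measurable_fst.const_mul π).ennreal_ofReal
  · apply Measurable.pow_const
    apply hρ.comp
    have : Continuous fun p : ℝ × ℝ => circleMap (c:ℂ) p.1 (π * p.2) := by
      simp only [circleMap]
      fun_prop
    exact this.measurable

lemma modulus_lower (a b : ℝ) (ha : 1 ≤ a) (hab : a < b) :
    ENNReal.ofReal (π⁻¹ * Real.log (((a + b) / 2 + 1) / ((b - a) / 2)))
      ≤ MHP (Icc a b) (Iic (-1)) := by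
  set c : ℝ := (a + b) / 2 with hc
  set s₀ : ℝ := (b - a) / 2 with hs₀
  set s₁ : ℝ := (a + b) / 2 + 1 with hs₁
  have h00 : 0 < s₀ := by rw [hs₀]; linarith
  have h01 : s₀ < s₁ := by rw [hs₀, hs₁]; linarith
  rw [MHP, modulus]
  refine le_iInf fun ρ => le_iInf fun hAdm => ?_
  have hρ := hAdm.1
  -- step 1: pointwise lower bound for the inner integrals over the annulus
  have key : ∫⁻ x in Ioo s₀ s₁, ENNReal.ofReal ((π * x)⁻¹) ≤ ∫⁻ z : ℂ, ρ z ^ 2 := by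
    refine le_trans ?_ (cov c ρ hρ s₀ s₁ h00)
    apply setLIntegral_mono' measurableSet_Ioo
    intro x hx
    have hxpos : 0 < x := h00.trans hx.1
    have hinner : ∫⁻ t in Ioo (0:ℝ) 1, ENNReal.ofReal (π * x) * ρ (circleMap (c:ℂ) x (π * t)) ^ 2
        = ENNReal.ofReal (π * x) * ∫⁻ t in Icc (0:ℝ) 1, ρ (sepCurve c x t) ^ 2 := by
      rw [lintegral_const_mul'' _ ?hm]
      · congr 1
        exact setLIntegral_congr Ioo_ae_eq_Icc
      case hm =>
        apply AEMeasurable.pow_const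
        exact (hρ.comp (sepCurve_continuous c x).measurable).aemeasurable
    rw [hinner]
    have hsq := admissible_sq_bound a b x ha hab hx.1 hx.2 hAdm
    calc ENNReal.ofReal ((π * x)⁻¹)
        = ENNReal.ofReal (π * x) * ENNReal.ofReal ((π * x)⁻¹) ^ 2 := by
          rw [← ENNReal.ofReal_pow (by positivity), ← ENNReal.ofReal_mul (by positivity)]
          congr 1
          have hne : π * x ≠ 0 := by positivity
          field_simp
      _ ≤ ENNReal.ofReal (π * x) * ∫⁻ t in Icc (0:ℝ) 1, ρ (sepCurve c x t) ^ 2 :=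
          mul_le_mul_right hsq _
  refine le_trans (le_of_eq ?_) key
  -- compute the elementary integral
  have hint : IntegrableOn (fun x => (π * x)⁻¹) (Ioo s₀ s₁) := by
    have hcont : ContinuousOn (fun x => (π * x)⁻¹) (Icc s₀ s₁) := by
      apply ContinuousOn.inv₀
      · fun_prop
      · intro x hx
        have : 0 < x := h00.trans_le hx.1
        positivity
    exact (hcont.integrableOn_compact isCompact_Icc).mono_set Ioo_subset_Icc_self
  rw [← ofReal_integral_eq_lintegral_ofReal hint ?pos]
  case pos =>
    filter_upwards [ae_restrict_mem measurableSet_Ioo] with x hx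
    have : 0 < x := h00.trans hx.1
    positivity
  congr 1
  have h1 : ∫ x in Ioo s₀ s₁, (π * x)⁻¹ = ∫ x in s₀..s₁, (π * x)⁻¹ := by
    rw [intervalIntegral.integral_of_le h01.le, ← MeasureTheory.integral_Ioc_eq_integral_Ioo]
  rw [h1]
  have h2 : ∫ x in s₀..s₁, (π * x)⁻¹ = π⁻¹ * ∫ x in s₀..s₁, x⁻¹ := by
    rw [← intervalIntegral.integral_const_mul]
    congr 1
    ext x
    rw [mul_inv]
  rw [h2, integral_inv (by
    intro hmem
    rcases hmem with ⟨h1', h2'⟩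
    simp only [inf_le_iff] at h1'
    rcases h1' with h | h <;> linarith)]


/-- If `K = (-∞,-1]`, `J = [a,b]` with `1 ≤ a < b`, and the modulus of the family
of curves in the upper half-plane separating `J` from `K` is at most `M`, then
`b ≥ (1 + e^{-2πM}) a`. -/
theorem statement3 (a b M : ℝ) (ha : 1 ≤ a) (hab : a < b)
    (hmod : MHP (Icc a b) (Iic (-1)) ≤ ENNReal.ofReal M) :
    (1 + Real.exp (-(2 * Real.pi * M))) * a ≤ b := by
  have hL := modulus_lower a b ha hab
  set Q : ℝ := ((a + b) / 2 + 1) / ((b - a) / 2) with hQdef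
  have hba : (0:ℝ) < b - a := by linarith
  have habp : (0:ℝ) < a + b + 2 := by linarith
  have hQeq : Q = (a + b + 2) / (b - a) := by
    rw [hQdef, div_eq_div_iff (by linarith : (b-a)/2 ≠ 0) (ne_of_gt hba)]
    ring
  have hQ1 : 1 < Q := by
    rw [hQeq, lt_div_iff₀ hba]; linarith
  have hQpos : 0 < Q := lt_trans one_pos hQ1
  have hlogpos : 0 < Real.log Q := Real.log_pos hQ1
  have hLpos : 0 < π⁻¹ * Real.log Q := by
    have := Real.pi_pos; positivity
  have hle : ENNReal.ofReal (π⁻¹ * Real.log Q) ≤ ENNReal.ofReal M := hL.trans hmod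
  have hM : π⁻¹ * Real.log Q ≤ M := by
    by_contra hcon
    push_neg at hcon
    exact absurd hle (not_le.mpr ((ENNReal.ofReal_lt_ofReal_iff hLpos).mpr hcon))
  have hπM : Real.log Q ≤ π * M := by
    have h := mul_le_mul_of_nonneg_left hM Real.pi_pos.le
    rwa [← mul_assoc, mul_inv_cancel₀ Real.pi_ne_zero, one_mul] at h
  set u : ℝ := Q⁻¹ with hu
  have hupos : 0 < u := by positivity
  have hexp : Real.exp (-(2 * π * M)) ≤ u * u := by
    have h1 : Real.exp (-(2 * π * M)) ≤ Real.exp (-(2 * Real.log Q)) := by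
      apply Real.exp_le_exp.mpr; linarith
    have h2 : Real.exp (-(2 * Real.log Q)) = u * u := by
      rw [show -(2 * Real.log Q) = -Real.log Q + -Real.log Q by ring, Real.exp_add,
        Real.exp_neg, Real.exp_log hQpos]
    linarith
  have hu1 : u * (a + b + 2) = b - a := by
    rw [hu, hQeq, inv_div]
    field_simp
  have h1 : u ≤ 1 := by nlinarith
  have h2 : u * a ≤ a + b + 2 := by nlinarith [mul_le_mul_of_nonneg_right h1 (by linarith : (0:ℝ) ≤ a)]
  have h3 : u * (u * a) ≤ u * (a + b + 2) := mul_le_mul_of_nonneg_left h2 hupos.le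
  have h4 : (1 + u * u) * a ≤ b := by nlinarith
  have h5 : (1 + Real.exp (-(2 * π * M))) * a ≤ (1 + u * u) * a := by
    apply mul_le_mul_of_nonneg_right _ (by linarith : (0:ℝ) ≤ a)
    linarith
  linarith
end
end

section
/- Let K = (−∞, −1] ⊂ ℝ and let (J_j)_{j≥1} be a sequence of pairwise disjoint intervals J_j = [a_j, b_j] contained in [1, ∞), in increasing order (b_j ≤ a_{j+1} for all j ≥ 1). Suppose M := sup_{j≥1} M(J_j, K) < ∞, where M(J_j, K) is the modulus of the family of curves in the upper half-plane separating J_j from K. Then, with ε = e^{−2πM}, the lengths satisfy b_j − a_j ≥ ε(1 + ε)^{j−1} for every j ≥ 1; in particular the lengths of the J_j grow exponentially in j and are uniformly bounded below by a constant depending only on M. -/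
open MeasureTheory Set Metric
open scoped ENNReal NNReal

noncomputable section

open Complex
open scoped Real

noncomputable def semic (c x : ℝ) (t : ℝ) : ℂ :=
  (c : ℂ) + (x : ℂ) * Complex.exp ((π * t : ℝ) * Complex.I)

lemma semic_surj {c x : ℝ} {z : ℂ} (hz : 0 < z.im)
    (habs : ‖z - c‖ = x) : z ∈ semic c x '' Icc 0 1 := by
  set w := z - (c:ℂ) with hw
  have hwim : 0 < w.im := by simp [hw, hz]
  have harg0 : 0 < Complex.arg w := by
    rcases lt_or_eq_of_le (Complex.arg_nonneg_iff.2 hwim.le) with h | h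
    · exact h
    · exact absurd ((Complex.arg_eq_zero_iff).1 h.symm).2 hwim.ne'
  have hargpi : Complex.arg w < π := Complex.arg_lt_pi_iff.2 (Or.inr hwim.ne')
  refine ⟨Complex.arg w / π, ⟨by positivity, ?_⟩, ?_⟩
  · rw [div_le_one Real.pi_pos]; exact hargpi.le
  · have hπ : π * (Complex.arg w / π) = Complex.arg w := by field_simp
    rw [semic, hπ]
    have h2 := Complex.norm_mul_exp_arg_mul_I w
    rw [habs] at h2
    rw [show ((Complex.arg w : ℝ) : ℂ) * Complex.I = (Complex.arg w : ℂ) * Complex.I from rfl, h2]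
    simp [hw]

lemma semic_im (c x t : ℝ) : (semic c x t).im = x * Real.sin (π * t) := by
  rw [semic, Complex.add_im, Complex.mul_im, Complex.ofReal_im, Complex.ofReal_re,
    exp_ofReal_mul_I_im, exp_ofReal_mul_I_re]
  simp

lemma semic_zero (c x : ℝ) : semic c x 0 = ((c + x : ℝ) : ℂ) := by simp [semic]

lemma semic_one (c x : ℝ) : semic c x 1 = ((c - x : ℝ) : ℂ) := by
  have h : ((π * 1 : ℝ) : ℂ) * Complex.I = (π : ℂ) * Complex.I := by push_cast; ring
  rw [semic, h, Complex.exp_pi_mul_I]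
  push_cast; ring

lemma semic_hasDerivAt (c x t : ℝ) :
    HasDerivAt (semic c x) ((x : ℂ) * (Complex.exp ((π * t : ℝ) * Complex.I) * ((π : ℂ) * Complex.I))) t := by
  have h1 : HasDerivAt (fun t : ℝ => π * t) π t := by
    simpa using (hasDerivAt_id t).const_mul π
  have h2 : HasDerivAt (fun t : ℝ => ((π * t : ℝ) : ℂ)) (π : ℂ) t := h1.ofReal_comp
  have h3 : HasDerivAt (fun t : ℝ => ((π * t : ℝ) : ℂ) * Complex.I) ((π : ℂ) * Complex.I) t :=
    h2.mul_const Complex.I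
  exact ((h3.cexp.const_mul (x : ℂ)).const_add (c : ℂ))

lemma semic_norm_deriv (c x : ℝ) (hx : 0 ≤ x) (t : ℝ) :
    ‖deriv (semic c x) t‖ = x * π := by
  rw [(semic_hasDerivAt c x t).deriv]
  rw [norm_mul, norm_mul, norm_mul, norm_exp_ofReal_mul_I, Complex.norm_I,
    Complex.norm_real, Complex.norm_real, Real.norm_eq_abs, Real.norm_eq_abs, _root_.abs_of_nonneg hx,
    _root_.abs_of_nonneg Real.pi_nonneg]
  ring

lemma semic_lipschitz (c x : ℝ) (hx : 0 ≤ x) : LipschitzWith (x * π).toNNReal (semic c x) := by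
  apply lipschitzWith_of_nnnorm_deriv_le (𝕜 := ℝ)
  · exact fun t => (semic_hasDerivAt c x t).differentiableAt
  · intro t
    rw [← norm_toNNReal, semic_norm_deriv c x hx]

lemma semic_mem_HPFamily {A B : ℝ} (hA : 1 ≤ A) (hAB : A < B) {x : ℝ}
    (hx1 : (B - A) / 2 < x) (hx2 : x < (A + B) / 2 + 1) :
    semic ((A + B) / 2) x ∈ HPFamily (Icc A B) (Iic (-1)) := by
  set c : ℝ := (A + B) / 2 with hc
  have hx0 : 0 < x := lt_of_le_of_lt (by linarith) hx1
  have hcA : c - x < A := by rw [hc]; linarith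
  have hcB : B < c + x := by rw [hc]; linarith
  have hm1 : (-1 : ℝ) < c - x := by rw [hc] at hx2 ⊢; linarith
  refine ⟨⟨⟨(x * π).toNNReal, (semic_lipschitz c x hx0.le).lipschitzOnWith⟩, ?_, ?_, ?_⟩, ?_, ?_, ?_⟩
  · intro t ht
    show 0 < (semic c x t).im
    rw [semic_im]
    exact mul_pos hx0 (Real.sin_pos_of_pos_of_lt_pi
      (mul_pos Real.pi_pos ht.1) (by nlinarith [Real.pi_pos, ht.2]))
  · rw [semic_zero]; simp
  · rw [semic_one]; simp
  · rw [semic_zero]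
    simp only [Complex.ofReal_re, mem_union, mem_Icc, mem_Iic, not_or]
    constructor
    · rintro ⟨-, h2⟩; linarith
    · intro h; linarith
  · rw [semic_one]
    simp only [Complex.ofReal_re, mem_union, mem_Icc, mem_Iic, not_or]
    constructor
    · rintro ⟨h1, -⟩; linarith
    · intro h; linarith
  · -- separation
    intro a' ha' b' hb' z hz ⟨haC, hbC⟩
    set S := HU \ (semic c x '' Icc 0 1) with hS
    set inner : Set ℂ := HU ∩ ball (c : ℂ) x with hinner
    set outer : Set ℂ := HU ∩ (closedBall (c : ℂ) x)ᶜ with houter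
    have hHUopen : IsOpen HU := by
      have : HU = Complex.im ⁻¹' (Ioi 0) := rfl
      rw [this]; exact isOpen_Ioi.preimage Complex.continuous_im
    have hio : IsOpen inner := hHUopen.inter isOpen_ball
    have hoo : IsOpen outer := hHUopen.inter Metric.isClosed_closedBall.isOpen_compl
    have hdisj : Disjoint inner outer := by
      rw [Set.disjoint_left]
      rintro w ⟨-, hw1⟩ ⟨-, hw2⟩
      exact hw2 (ball_subset_closedBall hw1)
    have hsub : S ⊆ inner ∪ outer := by
      rintro w ⟨hwHU, hwimg⟩
      rcases lt_trichotomy (dist w (c : ℂ)) x with h | h | h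
      · exact Or.inl ⟨hwHU, h⟩
      · exfalso
        exact hwimg (semic_surj hwHU (by rwa [← Complex.dist_eq]))
      · exact Or.inr ⟨hwHU, fun hw => absurd hw (not_le.2 h)⟩
    have hC : connectedComponentIn S z ⊆ inner ∪ outer :=
      (connectedComponentIn_subset S z).trans hsub
    have habs_b : ‖(b' : ℂ) - (c : ℂ)‖ = |b' - c| := by
      rw [show ((b' : ℂ) - (c : ℂ)) = ((b' - c : ℝ) : ℂ) by push_cast; ring, Complex.norm_real, Real.norm_eq_abs]
    have habs_a : ‖(a' : ℂ) - (c : ℂ)‖ = |a' - c| := by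
      rw [show ((a' : ℂ) - (c : ℂ)) = ((a' - c : ℝ) : ℂ) by push_cast; ring, Complex.norm_real, Real.norm_eq_abs]
    have hb1 : b' ≤ -1 := hb'
    rw [mem_Icc] at ha'
    rcases (isPreconnected_connectedComponentIn).subset_or_subset hio hoo hdisj hC with h | h
    · have hmem : ((b' : ℝ) : ℂ) ∈ closedBall (c : ℂ) x :=
        closure_minimal (h.trans (inter_subset_right.trans ball_subset_closedBall))
          Metric.isClosed_closedBall hbC
      rw [mem_closedBall, Complex.dist_eq, habs_b] at hmem
      have h2 : c - b' ≤ |b' - c| := by rw [abs_sub_comm]; exact le_abs_self _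
      linarith
    · have hmem : ((a' : ℝ) : ℂ) ∈ (ball (c : ℂ) x)ᶜ :=
        closure_minimal (h.trans (inter_subset_right.trans (compl_subset_compl.2 ball_subset_closedBall)))
          (isClosed_compl_iff.2 isOpen_ball) haC
      rw [mem_compl_iff, mem_ball, Complex.dist_eq, habs_a] at hmem
      have h2 : |a' - c| ≤ (B - A) / 2 := by
        rw [abs_le, hc]; constructor <;> linarith [ha'.1, ha'.2]
      exact hmem (lt_of_le_of_lt h2 hx1)

section Aux2
open Complex Real intervalIntegral
open scoped Real


noncomputable def T (c : ℝ) (p : ℝ × ℝ) : ℝ × ℝ :=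
  (c + p.1 * Real.cos (π * p.2), p.1 * Real.sin (π * p.2))

noncomputable def TD (p : ℝ × ℝ) : (ℝ × ℝ) →L[ℝ] (ℝ × ℝ) :=
  LinearMap.toContinuousLinearMap (Matrix.toLin (Module.Basis.finTwoProd ℝ) (Module.Basis.finTwoProd ℝ)
    !![Real.cos (π * p.2), -(π * p.1) * Real.sin (π * p.2);
       Real.sin (π * p.2), (π * p.1) * Real.cos (π * p.2)])

lemma T_hasFDerivAt (c : ℝ) (p : ℝ × ℝ) : HasFDerivAt (T c) (TD p) p := by
  unfold T TD
  rw [Matrix.toLin_finTwoProd_toContinuousLinearMap]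
  have hsnd : HasFDerivAt (fun q : ℝ × ℝ => π * q.2)
      ((π : ℝ) • ContinuousLinearMap.snd ℝ ℝ ℝ) p := hasFDerivAt_snd.const_mul π
  have hcos := (Real.hasDerivAt_cos (π * p.2)).comp_hasFDerivAt p hsnd
  have hsin := (Real.hasDerivAt_sin (π * p.2)).comp_hasFDerivAt p hsnd
  have h1 := (hasFDerivAt_fst (𝕜 := ℝ) (p := p) (E := ℝ) (F := ℝ)).mul hcos
  have h2 := (hasFDerivAt_fst (𝕜 := ℝ) (p := p) (E := ℝ) (F := ℝ)).mul hsin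
  convert HasFDerivAt.prodMk (h1.const_add c) h2 using 2 <;> (try rfl) <;>
    (simp [smul_smul, mul_comm, neg_mul, smul_neg, add_comm,
      neg_smul _ (ContinuousLinearMap.snd ℝ ℝ ℝ)] <;> (try (congr 1; ring)))

lemma TD_det (p : ℝ × ℝ) : (TD p).det = π * p.1 := by
  conv_rhs => rw [← one_mul (π * p.1), ← Real.cos_sq_add_sin_sq (π * p.2)]
  simp only [TD, neg_mul, LinearMap.det_toContinuousLinearMap, LinearMap.det_toLin,
    Matrix.det_fin_two_of, sub_neg_eq_add]
  ring

lemma T_inj {c r1 r2 : ℝ} (h0 : 0 < r1) : InjOn (T c) (Ioo r1 r2 ×ˢ Ioo (0:ℝ) 1) := by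
  rintro p hp q hq h
  have hp1 : 0 < p.1 := lt_trans h0 hp.1.1
  have hq1 : 0 < q.1 := lt_trans h0 hq.1.1
  have h1 : (T c p).1 = (T c q).1 := by rw [h]
  have h2 : (T c p).2 = (T c q).2 := by rw [h]
  simp only [T] at h1 h2
  have hsq : p.1 ^ 2 = q.1 ^ 2 := by
    have e1 : p.1 ^ 2 = (p.1 * Real.cos (π * p.2)) ^ 2 + (p.1 * Real.sin (π * p.2)) ^ 2 := by
      have := Real.sin_sq_add_cos_sq (π * p.2); nlinarith
    have e2 : q.1 ^ 2 = (q.1 * Real.cos (π * q.2)) ^ 2 + (q.1 * Real.sin (π * q.2)) ^ 2 := by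
      have := Real.sin_sq_add_cos_sq (π * q.2); nlinarith
    rw [e1, e2]
    rw [show p.1 * Real.cos (π * p.2) = q.1 * Real.cos (π * q.2) by linarith, h2]
  have hx : p.1 = q.1 := by nlinarith
  have hcos : Real.cos (π * p.2) = Real.cos (π * q.2) := by
    rw [hx] at h1
    exact mul_left_cancel₀ hq1.ne' (by linarith)
  have hmem1 : π * p.2 ∈ Icc 0 π :=
    ⟨by nlinarith [hp.2.1, Real.pi_pos], by nlinarith [hp.2.2, Real.pi_pos]⟩
  have hmem2 : π * q.2 ∈ Icc 0 π :=
    ⟨by nlinarith [hq.2.1, Real.pi_pos], by nlinarith [hq.2.2, Real.pi_pos]⟩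
  have ht : p.2 = q.2 := by
    have h := Real.injOn_cos hmem1 hmem2 hcos
    have := Real.pi_pos
    nlinarith
  exact Prod.ext hx ht

lemma T_semic (c : ℝ) (p : ℝ × ℝ) :
    Complex.measurableEquivRealProd.symm (T c p) = semic c p.1 p.2 := by
  have hre := Complex.exp_ofReal_mul_I_re (π * p.2)
  have him := Complex.exp_ofReal_mul_I_im (π * p.2)
  push_cast at hre him
  apply Complex.ext <;>
    simp [semic, T, Complex.measurableEquivRealProd, Complex.add_im, Complex.add_re,
      Complex.mul_re, Complex.mul_im, hre, him]

lemma sq_lintegral_le {α : Type*} [MeasurableSpace α] (μ : Measure α) (f : α → ℝ≥0∞)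
    (hf : AEMeasurable f μ) :
    (∫⁻ a, f a ∂μ) ^ 2 ≤ μ Set.univ * ∫⁻ a, (f a) ^ 2 ∂μ := by
  have hpq : Real.HolderConjugate 2 2 := by constructor <;> norm_num
  have h := ENNReal.lintegral_mul_le_Lp_mul_Lq μ hpq hf aemeasurable_const (g := fun _ => 1)
  simp only [mul_one, Pi.mul_apply, ENNReal.one_rpow, lintegral_const, one_mul] at h
  calc (∫⁻ a, f a ∂μ) ^ 2
      ≤ ((∫⁻ a, f a ^ (2:ℝ) ∂μ) ^ (1/(2:ℝ)) * μ Set.univ ^ (1/(2:ℝ))) ^ 2 := by gcongr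
    _ = μ Set.univ * ∫⁻ a, f a ^ 2 ∂μ := by
        rw [mul_pow, ← ENNReal.rpow_natCast (_ ^ (1/(2:ℝ))) 2,
          ← ENNReal.rpow_natCast (μ Set.univ ^ (1/(2:ℝ))) 2,
          ← ENNReal.rpow_mul, ← ENNReal.rpow_mul]
        norm_num
        rw [mul_comm]

lemma semic_continuous (c : ℝ) : Continuous (fun p : ℝ × ℝ => semic c p.1 p.2) := by
  unfold semic
  fun_prop

lemma inner_bound {c : ℝ} {x : ℝ} (hx : 0 < x) (ρ : ℂ → ℝ≥0∞) (hρ : Measurable ρ)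
    (hadm : (1:ℝ≥0∞) ≤ ∫⁻ t in Icc (0:ℝ) 1, ρ (semic c x t) * ENNReal.ofReal (x * π)) :
    ENNReal.ofReal ((π * x)⁻¹) ≤ ∫⁻ t in Ioo (0:ℝ) 1, ENNReal.ofReal (π * x) * ρ (semic c x t) ^ 2 := by
  set a : ℝ≥0∞ := ENNReal.ofReal (π * x) with ha
  have hπx : 0 < π * x := mul_pos Real.pi_pos hx
  have ha0 : a ≠ 0 := by simp [ha, ENNReal.ofReal_pos.2 hπx, ne_of_gt]
  have hatop : a ≠ ⊤ := ENNReal.ofReal_ne_top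
  have hmeas : Measurable fun t : ℝ => ρ (semic c x t) := by
    apply hρ.comp
    have : Continuous fun t : ℝ => semic c x t := by unfold semic; fun_prop
    exact this.measurable
  set L := ∫⁻ t in Icc (0:ℝ) 1, ρ (semic c x t) with hL
  set Q := ∫⁻ t in Icc (0:ℝ) 1, ρ (semic c x t) ^ 2 with hQ
  have h1 : (1:ℝ≥0∞) ≤ a * L := by
    rw [hL, ← lintegral_const_mul' _ _ hatop]
    refine le_trans hadm (le_of_eq (lintegral_congr fun t => ?_))
    rw [mul_comm, ha, mul_comm x π]
  have hCS : L ^ 2 ≤ Q := by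
    have := sq_lintegral_le (volume.restrict (Icc (0:ℝ) 1)) (fun t => ρ (semic c x t))
      hmeas.aemeasurable
    rwa [Measure.restrict_apply_univ, Real.volume_Icc, sub_zero, ENNReal.ofReal_one, one_mul]
      at this
  have h2 : (1:ℝ≥0∞) ≤ a ^ 2 * Q := by
    calc (1:ℝ≥0∞) = 1 * 1 := (one_mul 1).symm
      _ ≤ (a * L) * (a * L) := mul_le_mul' h1 h1
      _ = a ^ 2 * L ^ 2 := by ring
      _ ≤ a ^ 2 * Q := by gcongr
  have h3 : a⁻¹ ≤ a * Q := by
    calc a⁻¹ = a⁻¹ * 1 := (mul_one _).symm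
      _ ≤ a⁻¹ * (a ^ 2 * Q) := by gcongr
      _ = a * Q := by
          rw [sq, ← mul_assoc, ← mul_assoc, ENNReal.inv_mul_cancel ha0 hatop, one_mul]
  have h4 : ENNReal.ofReal ((π * x)⁻¹) = a⁻¹ := by
    rw [ha, ENNReal.ofReal_inv_of_pos hπx]
  rw [h4]
  refine h3.trans (le_of_eq ?_)
  rw [lintegral_const_mul' _ _ hatop]
  congr 1
  rw [hQ]
  exact (setLIntegral_congr Ioo_ae_eq_Icc).symm

lemma key_integral {c r1 r2 : ℝ} (h0 : 0 < r1) (h12 : r1 < r2) (ρ : ℂ → ℝ≥0∞)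
    (hρ : Measurable ρ)
    (hadm : ∀ x ∈ Ioo r1 r2,
      (1:ℝ≥0∞) ≤ ∫⁻ t in Icc (0:ℝ) 1, ρ (semic c x t) * ENNReal.ofReal (x * π)) :
    ENNReal.ofReal (π⁻¹ * Real.log (r2 / r1)) ≤ ∫⁻ z : ℂ, ρ z ^ 2 := by
  set s : Set (ℝ × ℝ) := Ioo r1 r2 ×ˢ Ioo (0:ℝ) 1 with hs
  have hsm : MeasurableSet s := measurableSet_Ioo.prod measurableSet_Ioo
  have hgm : Measurable fun p : ℝ × ℝ => ρ (semic c p.1 p.2) :=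
    hρ.comp (semic_continuous c).measurable
  -- transfer to ℝ × ℝ
  have h1 : ∫⁻ z : ℂ, ρ z ^ 2 =
      ∫⁻ p : ℝ × ℝ, ρ (Complex.measurableEquivRealProd.symm p) ^ 2 := by
    rw [(Complex.volume_preserving_equiv_real_prod.symm).lintegral_comp (hρ.pow_const 2)]
  rw [h1]
  have h2 : ∫⁻ p in T c '' s, ρ (Complex.measurableEquivRealProd.symm p) ^ 2 ≤
      ∫⁻ p : ℝ × ℝ, ρ (Complex.measurableEquivRealProd.symm p) ^ 2 :=
    setLIntegral_le_lintegral _ _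
  refine le_trans ?_ h2
  rw [lintegral_image_eq_lintegral_abs_det_fderiv_mul volume hsm
    (fun p _ => (T_hasFDerivAt c p).hasFDerivWithinAt) (T_inj h0) _]
  have h3 : ∫⁻ p in s, ENNReal.ofReal |(TD p).det| *
        ρ (Complex.measurableEquivRealProd.symm (T c p)) ^ 2 =
      ∫⁻ p in s, ENNReal.ofReal (π * p.1) * ρ (semic c p.1 p.2) ^ 2 := by
    refine setLIntegral_congr_fun hsm (fun p hp => ?_)
    rw [TD_det, T_semic, abs_of_pos (mul_pos Real.pi_pos (lt_trans h0 hp.1.1))]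
  rw [h3, hs, Measure.volume_eq_prod, ← Measure.prod_restrict, lintegral_prod]
  swap
  · exact (Measurable.mul (by fun_prop) (hgm.pow_const 2)).aemeasurable
  -- now iterated integral
  have h4 : ∀ x ∈ Ioo r1 r2, ENNReal.ofReal ((π * x)⁻¹) ≤
      ∫⁻ y in Ioo (0:ℝ) 1, ENNReal.ofReal (π * x) * ρ (semic c x y) ^ 2 := fun x hx =>
    inner_bound (lt_trans h0 hx.1) ρ hρ (hadm x hx)
  calc ENNReal.ofReal (π⁻¹ * Real.log (r2 / r1))
      = ∫⁻ x in Ioo r1 r2, ENNReal.ofReal ((π * x)⁻¹) := by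
        rw [← MeasureTheory.ofReal_integral_eq_lintegral_ofReal]
        · congr 1
          have : ∀ x : ℝ, (π * x)⁻¹ = π⁻¹ * x⁻¹ := fun x => by rw [mul_inv]
          simp_rw [this]
          have hint : ∫ x in r1..r2, x⁻¹ = Real.log (r2 / r1) :=
            integral_inv_of_pos h0 (lt_trans h0 h12)
          rw [MeasureTheory.integral_const_mul, ← MeasureTheory.integral_Ioc_eq_integral_Ioo,
            ← intervalIntegral.integral_of_le h12.le, hint]
        · refine (ContinuousOn.integrableOn_Icc ?_).mono_set Ioo_subset_Icc_self
          intro x hx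
          have hx0 : x ≠ 0 := (lt_of_lt_of_le h0 hx.1).ne'
          exact ((continuous_const.mul continuous_id).continuousWithinAt).inv₀
            (mul_ne_zero Real.pi_ne_zero hx0)
        · refine (ae_restrict_mem measurableSet_Ioo).mono fun x hx => ?_
          have : 0 < x := lt_trans h0 hx.1
          positivity
    _ ≤ ∫⁻ x in Ioo r1 r2, ∫⁻ y in Ioo (0:ℝ) 1,
          ENNReal.ofReal (π * x) * ρ (semic c x y) ^ 2 := by
        refine setLIntegral_mono' measurableSet_Ioo h4

end Aux2

section Aux
open Complex Real intervalIntegral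
open scoped Real

lemma MHP_lower {A B : ℝ} (hA : 1 ≤ A) (hAB : A < B) :
    ENNReal.ofReal (π⁻¹ * Real.log ((A + B + 2) / (B - A))) ≤ MHP (Icc A B) (Iic (-1)) := by
  rw [MHP, modulus]
  refine le_iInf fun ρ => le_iInf fun hadm => ?_
  set c : ℝ := (A + B) / 2 with hc
  have hr0 : 0 < (B - A) / 2 := by linarith
  have hr12 : (B - A) / 2 < c + 1 := by rw [hc]; linarith
  have hside : ∀ x ∈ Ioo ((B - A) / 2) (c + 1),
      (1:ℝ≥0∞) ≤ ∫⁻ t in Icc (0:ℝ) 1, ρ (semic c x t) * ENNReal.ofReal (x * π) := by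
    intro x hx
    have hx0 : 0 < x := lt_trans hr0 hx.1
    have hmem := semic_mem_HPFamily hA hAB hx.1 (show x < (A + B) / 2 + 1 from hx.2)
    have h1 := hadm.2 _ hmem
    rw [lineIntegral] at h1
    refine h1.trans (le_of_eq (lintegral_congr fun t => ?_))
    rw [semic_norm_deriv c x hx0.le]
  have hkey := key_integral hr0 hr12 ρ hadm.1 hside
  have hratio : (c + 1) / ((B - A) / 2) = (A + B + 2) / (B - A) := by
    rw [hc]
    have hBA : B - A ≠ 0 := by intro h; linarith
    field_simp
  rwa [hratio] at hkey

end Aux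


/-- If `K = (-∞,-1]` and `J_j = [a j, b j] ⊂ [1,∞)` (for `j = 1, 2, …`, here
indexed by `n = j - 1 : ℕ`) are disjoint intervals in increasing order whose
separating moduli from `K` in the upper half-plane are all at most `M`, then
with `ε = e^{-2πM}` the lengths satisfy `b_j - a_j ≥ ε (1+ε)^{j-1}`; in
particular they grow exponentially and are bounded below by a constant
depending only on `M`. -/
theorem statement4 (a b : ℕ → ℝ) (M : ℝ)
    (hab : ∀ n : ℕ, 1 ≤ a n ∧ a n < b n)
    (horder : ∀ n : ℕ, b n ≤ a (n + 1))
    (hmod : ∀ n : ℕ, MHP (Icc (a n) (b n)) (Iic (-1)) ≤ ENNReal.ofReal M) :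
    ∀ n : ℕ, Real.exp (-(2 * Real.pi * M)) *
        (1 + Real.exp (-(2 * Real.pi * M))) ^ n ≤ b n - a n := by
  set ε : ℝ := Real.exp (-(2 * Real.pi * M)) with hε
  have hεpos : 0 < ε := Real.exp_pos _
  have hπ := Real.pi_pos
  -- basic consequence of the modulus bounds
  have hM : ∀ n : ℕ, Real.pi⁻¹ * Real.log ((a n + b n + 2) / (b n - a n)) ≤ M := by
    intro n
    have h1 := (MHP_lower (hab n).1 (hab n).2).trans (hmod n)
    have hR : 1 < (a n + b n + 2) / (b n - a n) := by
      rw [lt_div_iff₀ (by linarith [(hab n).1, (hab n).2])]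
      linarith [(hab n).1, (hab n).2]
    have hpos : 0 < Real.pi⁻¹ * Real.log ((a n + b n + 2) / (b n - a n)) := by
      have := Real.log_pos hR
      positivity
    rcases (ENNReal.ofReal_le_ofReal_iff').1 h1 with h | h
    · exact h
    · linarith
  have hM0 : 0 < M := by
    have h0 := hM 0
    have hR : 1 < (a 0 + b 0 + 2) / (b 0 - a 0) := by
      rw [lt_div_iff₀ (by linarith [(hab 0).1, (hab 0).2])]
      linarith [(hab 0).1, (hab 0).2]
    have := Real.log_pos hR
    nlinarith [inv_pos.2 hπ]
  -- main geometric inequality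
  have hkey : ∀ n : ℕ, 2 * ε * (a n + 1) ≤ b n - a n := by
    intro n
    have h1 : Real.log ((a n + b n + 2) / (b n - a n)) ≤ Real.pi * M := by
      have := hM n
      calc Real.log ((a n + b n + 2) / (b n - a n))
          = Real.pi * (Real.pi⁻¹ * Real.log ((a n + b n + 2) / (b n - a n))) := by
            field_simp
        _ ≤ Real.pi * M := by nlinarith
    have hba : 0 < b n - a n := by linarith [(hab n).2]
    have hR0 : 0 < (a n + b n + 2) / (b n - a n) := by
      apply div_pos (by linarith [(hab n).1, (hab n).2]) hba
    have h2 : (a n + b n + 2) / (b n - a n) ≤ Real.exp (Real.pi * M) :=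
      (Real.log_le_iff_le_exp hR0).1 h1
    have h3 : a n + b n + 2 ≤ Real.exp (Real.pi * M) * (b n - a n) := by
      rwa [div_le_iff₀ hba] at h2
    have h4 : Real.exp (-(Real.pi * M)) * (a n + b n + 2) ≤ b n - a n := by
      rw [Real.exp_neg]
      rw [inv_mul_le_iff₀ (Real.exp_pos _)]
      linarith
    have h5 : ε ≤ Real.exp (-(Real.pi * M)) := by
      apply Real.exp_le_exp.2
      nlinarith
    have h6 : 2 * (a n + 1) ≤ a n + b n + 2 := by linarith [(hab n).2]
    nlinarith [Real.exp_pos (-(Real.pi * M)), (hab n).1]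
  -- growth of a n
  have hgrow : ∀ n : ℕ, 2 * (1 + 2 * ε) ^ n ≤ a n + 1 := by
    intro n
    induction n with
    | zero => simpa using by linarith [(hab 0).1]
    | succ k ih =>
      have h1 : (1 + 2 * ε) * (a k + 1) ≤ a (k + 1) + 1 := by
        have := hkey k
        have := horder k
        nlinarith
      calc 2 * (1 + 2 * ε) ^ (k + 1) = (1 + 2 * ε) * (2 * (1 + 2 * ε) ^ k) := by ring
        _ ≤ (1 + 2 * ε) * (a k + 1) := by nlinarith [pow_nonneg (by linarith : (0:ℝ) ≤ 1 + 2*ε) k]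
        _ ≤ a (k + 1) + 1 := h1
  intro n
  have h1 : (1 + ε) ^ n ≤ (1 + 2 * ε) ^ n :=
    pow_le_pow_left₀ (by linarith) (by linarith) n
  have h2 := hgrow n
  have h3 := hkey n
  nlinarith [pow_nonneg (by linarith : (0:ℝ) ≤ 1 + ε) n]
end
end

section
/- Let C ≥ 1 and M > 1. Let x : ℤ → ℝ be strictly increasing with x(0) = −1, x(1) = 1, x(j) → ±∞ as j → ±∞, and suppose the partition of ℝ into the intervals I_j = (x(j), x(j+1)) has bounded geometry constant C, i.e. 1/C ≤ (x(j+2) − x(j+1))/(x(j+1) − x(j)) ≤ C for all j ∈ ℤ. Then there exists a strictly increasing y : ℤ → ℝ with y(0) = −1, y(1) = 1 and y(j) → ±∞ as j → ±∞ such that, writing ℓ_j = y(j+1) − y(j): (1) (−1, 1) is an interval of the new partition; (2) the partition is symmetric about 0, i.e. y(1 − j) = −y(j) for all j ∈ ℤ; (3) ℓ_0 = 2, ℓ_1 ≤ 2, and the sequence (ℓ_j)_{j ≥ 1} is non-increasing (so by symmetry the lengths are a non-increasing function of the distance of the index from 0); (4) for every j ≠ 0, ℓ_j is an integer power of 2;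 (5) for every j ≠ 0 and every k ∈ ℤ, if (y(j), y(j+1)) ∩ (x(k), x(k+1)) ≠ ∅ then ℓ_j < (x(k+1) − x(k))/M; (6) there is a constant C′ < ∞ depending only on C and M such that 1/C′ ≤ ℓ_{j+1}/ℓ_j ≤ C′ for all j ∈ ℤ. -/
set_option linter.unusedSectionVars false

open Set Filter

namespace S6

variable (x : ℤ → ℝ) (hex : ∀ t : ℝ, ∃ k : ℤ, x k ≤ t ∧ t < x (k + 1))

noncomputable def idx (t : ℝ) : ℤ := (hex t).choose

lemma idx_le (t : ℝ) : x (idx x hex t) ≤ t := (hex t).choose_spec.1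
lemma lt_idx (t : ℝ) : t < x (idx x hex t + 1) := (hex t).choose_spec.2

lemma idx_unique (hx : StrictMono x) {t : ℝ} {a : ℤ} (h1 : x a ≤ t) (h2 : t < x (a+1)) :
    idx x hex t = a := by
  rcases lt_trichotomy (idx x hex t) a with h | h | h
  · have h' : idx x hex t + 1 ≤ a := h
    exact absurd (le_trans (hx.monotone h') h1) (not_le.2 (lt_idx x hex t))
  · exact h
  · have h' : a + 1 ≤ idx x hex t := h
    exact absurd (le_trans (hx.monotone h') (idx_le x hex t)) (not_le.2 h2)

noncomputable def len (k : ℤ) : ℝ := x (k+1) - x k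

noncomputable def dd (t : ℝ) : ℝ := min (len x (idx x hex t)) (len x (idx x hex t + 1))
noncomputable def ee (t : ℝ) : ℝ := min (len x (idx x hex (-t) - 1)) (len x (idx x hex (-t)))
noncomputable def DD (t : ℝ) : ℝ := min (dd x hex t) (ee x hex t)

noncomputable def PP (M t : ℝ) : ℝ := (2:ℝ) ^ (Int.log 2 (DD x hex t / (2*M)))

noncomputable def ff (M : ℝ) : ℕ → ℝ × ℝ
  | 0 => (1, min 2 (PP x hex M 1))
  | n + 1 => ((ff M n).1 + (ff M n).2,
      min ((ff M n).2) (PP x hex M ((ff M n).1 + (ff M n).2)))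

noncomputable def YY (M : ℝ) (n : ℕ) : ℝ := (ff x hex M n).1
noncomputable def LL (M : ℝ) (n : ℕ) : ℝ := (ff x hex M n).2

lemma YY_zero (M : ℝ) : YY x hex M 0 = 1 := rfl
lemma YY_succ (M : ℝ) (n : ℕ) : YY x hex M (n+1) = YY x hex M n + LL x hex M n := rfl
lemma LL_zero (M : ℝ) : LL x hex M 0 = min 2 (PP x hex M 1) := rfl
lemma LL_succ (M : ℝ) (n : ℕ) :
    LL x hex M (n+1) = min (LL x hex M n) (PP x hex M (YY x hex M (n+1))) := rfl

section Facts

variable {C M : ℝ} (hC : 1 ≤ C) (hM : 1 < M) (hx : StrictMono x)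
  (hlenpos : ∀ k, 0 < len x k)
  (hlen1 : ∀ k, len x k ≤ C * len x (k+1))
  (hlen2 : ∀ k, len x (k+1) ≤ C * len x k)

include hlenpos in
lemma dd_pos (t : ℝ) : 0 < dd x hex t := lt_min (hlenpos _) (hlenpos _)

include hlenpos in
lemma ee_pos (t : ℝ) : 0 < ee x hex t := lt_min (hlenpos _) (hlenpos _)

include hlenpos in
lemma DD_pos (t : ℝ) : 0 < DD x hex t := lt_min (dd_pos x hex hlenpos t) (ee_pos x hex hlenpos t)

lemma PP_pos (M t : ℝ) : 0 < PP x hex M t := by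
  have : (0:ℝ) < 2 := by norm_num
  exact zpow_pos this _

include hlenpos hM in
lemma PP_le (t : ℝ) : 2 * M * PP x hex M t ≤ DD x hex t := by
  have hM0 : (0:ℝ) < 2 * M := by linarith
  have hr : 0 < DD x hex t / (2*M) := div_pos (DD_pos x hex hlenpos t) hM0
  have h := Int.zpow_log_le_self (R := ℝ) (b := 2) (by norm_num) hr
  have h2 : PP x hex M t ≤ DD x hex t / (2*M) := by
    unfold PP; push_cast at h; exact h
  rw [le_div_iff₀ hM0] at h2
  linarith

include hlenpos hM in
lemma lt_PP (t : ℝ) : DD x hex t < 4 * M * PP x hex M t := by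
  have hM0 : (0:ℝ) < 2 * M := by linarith
  have h := Int.lt_zpow_succ_log_self (R := ℝ) (b := 2) (by norm_num) (DD x hex t / (2*M))
  have h2 : DD x hex t / (2*M) < 2 * PP x hex M t := by
    unfold PP
    push_cast at h
    rw [zpow_add_one₀ (by norm_num : (2:ℝ) ≠ 0)] at h
    nlinarith [PP_pos x hex M t]
  rw [div_lt_iff₀ hM0] at h2
  nlinarith [PP_pos x hex M t]

include hC hx hlenpos hlen1 hlen2 in
lemma dd_step {t l : ℝ} (hl : 0 < l) (hle : l ≤ dd x hex t) :
    dd x hex t ≤ C * dd x hex (t + l) := by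
  have hC0 : (0:ℝ) < C := by linarith
  set k := idx x hex t with hk
  have hk1 : x k ≤ t := idx_le x hex t
  have hk2 : t < x (k+1) := lt_idx x hex t
  have hub : t + l < x (k+1+1) := by
    have h1 : l ≤ len x (k+1) := le_trans hle (min_le_right _ _)
    have := hlenpos (k+1)
    unfold len at h1
    linarith
  rcases lt_or_ge (t + l) (x (k+1)) with h | h
  · have hi : idx x hex (t+l) = k := idx_unique x hex hx (by linarith) h
    have : dd x hex (t+l) = dd x hex t := by unfold dd; rw [hi]
    rw [this]
    nlinarith [dd_pos x hex hlenpos t]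
  · have hi : idx x hex (t+l) = k + 1 := idx_unique x hex hx h hub
    have hdd : dd x hex (t+l) = min (len x (k+1)) (len x (k+1+1)) := by
      unfold dd; rw [hi]
    rw [hdd]
    have h1 : dd x hex t ≤ len x (k+1) := min_le_right _ _
    have h2 : len x (k+1) ≤ C * len x (k+1+1) := hlen1 (k+1)
    have h3 := hlenpos (k+1)
    rcases le_total (len x (k+1)) (len x (k+1+1)) with hc | hc
    · rw [min_eq_left hc]; nlinarith
    · rw [min_eq_right hc]; nlinarith

include hC hx hlenpos hlen1 hlen2 in
lemma ee_step {t l : ℝ} (hl : 0 < l) (hle : l ≤ ee x hex t) :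
    ee x hex t ≤ C * ee x hex (t + l) := by
  have hC0 : (0:ℝ) < C := by linarith
  set k := idx x hex (-t) with hk
  have hk1 : x k ≤ -t := idx_le x hex (-t)
  have hk2 : -t < x (k+1) := lt_idx x hex (-t)
  have hneg : -(t + l) = -t - l := by ring
  have hlb : x (k-1) ≤ -t - l := by
    have h1 : l ≤ len x (k-1) := le_trans hle (min_le_left _ _)
    have h2 : x (k-1+1) = x k := by norm_num
    unfold len at h1
    rw [h2] at h1
    linarith
  rcases lt_or_ge (-t - l) (x k) with h | h
  · have hi : idx x hex (-(t+l)) = k - 1 := by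
      apply idx_unique x hex hx (by rw [hneg]; exact hlb)
      rw [hneg]; simpa using h
    have hee : ee x hex (t+l) = min (len x (k-1-1)) (len x (k-1)) := by
      unfold ee; rw [hi]
    rw [hee]
    have h1 : ee x hex t ≤ len x (k-1) := min_le_left _ _
    have h2 : len x (k-1) ≤ C * len x (k-1-1) := by
      have := hlen2 (k-1-1)
      have e : k-1-1+1 = k-1 := by ring
      rwa [e] at this
    have h3 := hlenpos (k-1)
    rcases le_total (len x (k-1-1)) (len x (k-1)) with hc | hc
    · rw [min_eq_left hc]; nlinarith
    · rw [min_eq_right hc]; nlinarith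
  · have hi : idx x hex (-(t+l)) = k := by
      apply idx_unique x hex hx (by rw [hneg]; exact h)
      rw [hneg]; linarith
    have hee : ee x hex (t+l) = ee x hex t := by unfold ee; rw [hi]
    rw [hee]
    nlinarith [ee_pos x hex hlenpos t]

include hC hx hlenpos hlen1 hlen2 in
lemma DD_step {t l : ℝ} (hl : 0 < l) (hle : l ≤ DD x hex t) :
    DD x hex t ≤ C * DD x hex (t + l) := by
  have h1 := dd_step x hex hC hx hlenpos hlen1 hlen2 hl
    (le_trans hle (min_le_left _ _))
  have h2 := ee_step x hex hC hx hlenpos hlen1 hlen2 hl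
    (le_trans hle (min_le_right _ _))
  have hd : DD x hex t ≤ C * dd x hex (t+l) := le_trans (min_le_left _ _) h1
  have he : DD x hex t ≤ C * ee x hex (t+l) := le_trans (min_le_right _ _) h2
  unfold DD
  rcases le_total (dd x hex (t+l)) (ee x hex (t+l)) with hc | hc
  · rw [min_eq_left hc]
    exact le_trans (min_le_left _ _) h1
  · rw [min_eq_right hc]
    exact le_trans (min_le_right _ _) h2

end Facts

section Invariants

variable {C M : ℝ} (hC : 1 ≤ C) (hM : 1 < M) (hx : StrictMono x)
  (hlenpos : ∀ k, 0 < len x k)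
  (hlen1 : ∀ k, len x k ≤ C * len x (k+1))
  (hlen2 : ∀ k, len x (k+1) ≤ C * len x k)

include hM hlenpos in
lemma LL_pos (n : ℕ) : 0 < LL x hex M n := by
  induction n with
  | zero => exact lt_min (by norm_num) (PP_pos x hex M 1)
  | succ n ih => exact lt_min ih (PP_pos x hex M _)

include hM hlenpos in
lemma YY_ge_one (n : ℕ) : 1 ≤ YY x hex M n := by
  induction n with
  | zero => exact le_refl 1
  | succ n ih =>
    rw [YY_succ]
    have := LL_pos x hex hM hlenpos n
    linarith

include hM hlenpos in
lemma YY_mono : Monotone (YY x hex M) := by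
  apply monotone_nat_of_le_succ
  intro n
  rw [YY_succ]
  have := LL_pos x hex hM hlenpos n
  linarith

lemma LL_le_PP (n : ℕ) : LL x hex M n ≤ PP x hex M (YY x hex M n) := by
  cases n with
  | zero => exact min_le_right _ _
  | succ n => exact min_le_right _ _

include hM hlenpos in
lemma LL_le_DD (n : ℕ) : 2 * M * LL x hex M n ≤ DD x hex (YY x hex M n) := by
  have h1 := LL_le_PP x hex (M := M) n
  have h2 := PP_le x hex hM hlenpos (YY x hex M n)
  nlinarith [PP_pos x hex M (YY x hex M n)]

include hM hlenpos in
lemma LL_le_DD' (n : ℕ) : LL x hex M n ≤ DD x hex (YY x hex M n) := by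
  have := LL_le_DD x hex hM hlenpos n
  have := LL_pos x hex hM hlenpos n
  nlinarith

lemma LL_antitone (n : ℕ) : LL x hex M (n+1) ≤ LL x hex M n := min_le_left _ _

lemma LL_le_two (n : ℕ) : LL x hex M n ≤ 2 := by
  induction n with
  | zero => exact min_le_left _ _
  | succ n ih => exact le_trans (min_le_left _ _) ih

include hC hM hx hlenpos hlen1 hlen2 in
lemma LL_ratio (n : ℕ) : LL x hex M n ≤ 2 * C * LL x hex M (n+1) := by
  have hC0 : (0:ℝ) < C := by linarith
  have hLpos := LL_pos x hex hM hlenpos n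
  have hstep := DD_step x hex hC hx hlenpos hlen1 hlen2 hLpos
    (LL_le_DD' x hex hM hlenpos n)
  rw [← YY_succ] at hstep
  have hPP := lt_PP x hex hM hlenpos (YY x hex M (n+1))
  have hDD := LL_le_DD x hex hM hlenpos n
  have hkey : LL x hex M n ≤ 2 * C * PP x hex M (YY x hex M (n+1)) := by
    nlinarith
  rw [LL_succ]
  rcases le_total (LL x hex M n) (PP x hex M (YY x hex M (n+1))) with hc | hc
  · rw [min_eq_left hc]; nlinarith
  · rw [min_eq_right hc]; exact hkey

lemma LL_pow2 (n : ℕ) : ∃ m : ℤ, LL x hex M n = 2 ^ m := by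
  induction n with
  | zero =>
    rw [LL_zero]
    rcases le_total (2:ℝ) (PP x hex M 1) with hc | hc
    · exact ⟨1, by rw [min_eq_left hc]; norm_num⟩
    · exact ⟨_, by rw [min_eq_right hc]; rfl⟩
  | succ n ih =>
    obtain ⟨m, hm⟩ := ih
    rw [LL_succ, hm]
    rcases le_total ((2:ℝ)^m) (PP x hex M (YY x hex M (n+1))) with hc | hc
    · exact ⟨m, by rw [min_eq_left hc]⟩
    · exact ⟨_, by rw [min_eq_right hc]; rfl⟩

include hM hx hlenpos in
lemma prop5pos (n : ℕ) (k : ℤ)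
    (h : (Ioo (YY x hex M n) (YY x hex M n + LL x hex M n) ∩ Ioo (x k) (x (k+1))).Nonempty) :
    M * LL x hex M n < len x k := by
  obtain ⟨t, ⟨hty1, hty2⟩, htx1, htx2⟩ := h
  set k₀ := idx x hex (YY x hex M n) with hk₀
  have hk1 : x k₀ ≤ YY x hex M n := idx_le x hex _
  have hk2 : YY x hex M n < x (k₀+1) := lt_idx x hex _
  have hdd : DD x hex (YY x hex M n) ≤ dd x hex (YY x hex M n) := min_le_left _ _
  have hL : LL x hex M n ≤ len x (k₀+1) := by
    refine le_trans (LL_le_DD' x hex hM hlenpos n) (le_trans hdd (min_le_right _ _))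
  have hub : YY x hex M n + LL x hex M n < x (k₀+1+1) := by
    have := hlenpos (k₀+1); unfold len at hL; linarith
  have hklt : k < k₀ + 1 + 1 := by
    have : x k < x (k₀+1+1) := by linarith
    exact hx.lt_iff_lt.mp this
  have hkge : k₀ ≤ k := by
    have : x k₀ < x (k+1) := by linarith
    have := hx.lt_iff_lt.mp this
    omega
  have hlen : dd x hex (YY x hex M n) ≤ len x k := by
    rcases (by omega : k = k₀ ∨ k = k₀ + 1) with rfl | rfl
    · exact min_le_left _ _
    · exact min_le_right _ _
  have := LL_le_DD x hex hM hlenpos n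
  have := LL_pos x hex hM hlenpos n
  nlinarith

include hM hx hlenpos in
lemma prop5neg (n : ℕ) (k : ℤ)
    (h : (Ioo (-YY x hex M n - LL x hex M n) (-YY x hex M n) ∩ Ioo (x k) (x (k+1))).Nonempty) :
    M * LL x hex M n < len x k := by
  obtain ⟨t, ⟨hty1, hty2⟩, htx1, htx2⟩ := h
  set k₀ := idx x hex (-YY x hex M n) with hk₀
  have hk1 : x k₀ ≤ -YY x hex M n := idx_le x hex _
  have hk2 : -YY x hex M n < x (k₀+1) := lt_idx x hex _
  have hee : DD x hex (YY x hex M n) ≤ ee x hex (YY x hex M n) := min_le_right _ _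
  have heeq : ee x hex (YY x hex M n) = min (len x (k₀-1)) (len x k₀) := by
    unfold ee; rfl
  have hL : LL x hex M n ≤ len x (k₀-1) := by
    refine le_trans (LL_le_DD' x hex hM hlenpos n) (le_trans hee ?_)
    rw [heeq]; exact min_le_left _ _
  have hlb : x (k₀-1) ≤ -YY x hex M n - LL x hex M n := by
    have e : x (k₀-1+1) = x k₀ := by norm_num
    unfold len at hL; rw [e] at hL; linarith
  have hkle : k ≤ k₀ := by
    have : x k < x (k₀+1) := by linarith
    have := hx.lt_iff_lt.mp this
    omega
  have hkge : k₀ - 1 ≤ k := by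
    have : x (k₀-1) < x (k+1) := by linarith
    have := hx.lt_iff_lt.mp this
    omega
  have hlen : ee x hex (YY x hex M n) ≤ len x k := by
    rw [heeq]
    rcases (by omega : k = k₀ - 1 ∨ k = k₀) with rfl | rfl
    · exact min_le_left _ _
    · exact min_le_right _ _
  have := LL_le_DD x hex hM hlenpos n
  have := LL_pos x hex hM hlenpos n
  nlinarith

include hC hM hx hlenpos hlen1 hlen2 in
lemma LL_zero_lower (hx0 : x 0 = -1) (hx1 : x 1 = 1) :
    1 ≤ 2 * M * C^2 * LL x hex M 0 := by
  have hC0 : (0:ℝ) < C := by linarith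
  have hi1 : idx x hex 1 = 1 := by
    apply idx_unique x hex hx (le_of_eq hx1)
    rw [← hx1]; exact hx (by norm_num)
  have hi2 : idx x hex (-1) = 0 := by
    apply idx_unique x hex hx (le_of_eq hx0)
    norm_num [hx1]
  have hlen0 : len x 0 = 2 := by unfold len; norm_num [hx1, hx0]
  have h1 : (2:ℝ) ≤ C * len x 1 := by
    have := hlen1 0; rw [hlen0] at this; exact this
  have h2 : len x 1 ≤ C * len x 2 := by
    have := hlen1 1; convert this using 3 <;> norm_num
  have h3 : (2:ℝ) ≤ C * len x (-1) := by
    have := hlen2 (-1); norm_num at this; rw [hlen0] at this; exact this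
  have hddv : dd x hex 1 = min (len x 1) (len x 2) := by
    unfold dd; rw [hi1]; norm_num
  have heev : ee x hex 1 = min (len x (-1)) (len x 0) := by
    unfold ee; rw [hi2]; norm_num
  have hDD : 2 ≤ C^2 * DD x hex 1 := by
    have p1 := hlenpos 1
    have p2 := hlenpos 2
    have pm := hlenpos (-1)
    have hd : 2 ≤ C^2 * dd x hex 1 := by
      rw [hddv]
      rcases le_total (len x 1) (len x 2) with hc | hc
      · rw [min_eq_left hc]; nlinarith
      · rw [min_eq_right hc]; nlinarith
    have he : 2 ≤ C^2 * ee x hex 1 := by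
      rw [heev, hlen0]
      rcases le_total (len x (-1)) (2:ℝ) with hc | hc
      · rw [min_eq_left hc]; nlinarith
      · rw [min_eq_right hc]; nlinarith
    unfold DD
    rcases le_total (dd x hex 1) (ee x hex 1) with hc | hc
    · rw [min_eq_left hc]; exact hd
    · rw [min_eq_right hc]; exact he
  have hPP := lt_PP x hex hM hlenpos 1
  have hPpos := PP_pos x hex M 1
  have hP : 1 ≤ 2 * M * C^2 * PP x hex M 1 := by nlinarith
  rw [LL_zero]
  rcases le_total (2:ℝ) (PP x hex M 1) with hc | hc
  · rw [min_eq_left hc]; nlinarith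
  · rw [min_eq_right hc]; exact hP

include hC hM hx hlenpos hlen1 hlen2 in
lemma YY_tendsto (hxT : Tendsto x atTop atTop) (hxB : Tendsto x atBot atBot) :
    Tendsto (YY x hex M) atTop atTop := by
  have hC0 : (0:ℝ) < C := by linarith
  have hM0 : (0:ℝ) < M := by linarith
  rcases tendsto_of_monotone (YY_mono x hex hM hlenpos) with h | ⟨l, hl⟩
  · exact h
  exfalso
  have hub : ∀ n, YY x hex M n ≤ l := (YY_mono x hex hM hlenpos).ge_of_tendsto hl
  have hl1 : (1:ℝ) ≤ l := le_trans (YY_ge_one x hex hM hlenpos 0) (hub 0)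
  obtain ⟨K₁, hK₁⟩ := (hxT.eventually_gt_atTop l).exists
  obtain ⟨K₂, hK₂⟩ := (hxB.eventually_lt_atBot (-l)).exists
  have hKK : K₂ - 1 ≤ K₁ := by
    have : x K₂ < x K₁ := by linarith
    have := hx.lt_iff_lt.mp this
    omega
  have hsne : (Finset.Icc (K₂ - 1) K₁).Nonempty := Finset.nonempty_Icc.mpr hKK
  set δ := (Finset.Icc (K₂ - 1) K₁).inf' hsne (len x) with hδ
  have hδpos : 0 < δ := by
    rw [hδ, Finset.lt_inf'_iff]
    intro i _
    exact hlenpos i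
  have hmem : ∀ a : ℤ, K₂ - 1 ≤ a → a ≤ K₁ → δ ≤ len x a := fun a h1 h2 =>
    Finset.inf'_le _ (Finset.mem_Icc.mpr ⟨h1, h2⟩)
  have hDD : ∀ t : ℝ, 1 ≤ t → t ≤ l → δ ≤ DD x hex t := by
    intro t ht1 ht2
    have ha1 : x (idx x hex t) ≤ t := idx_le x hex t
    have ha2 : t < x (idx x hex t + 1) := lt_idx x hex t
    have hb1 : x (idx x hex (-t)) ≤ -t := idx_le x hex (-t)
    have hb2 : -t < x (idx x hex (-t) + 1) := lt_idx x hex (-t)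
    have haK : idx x hex t < K₁ := hx.lt_iff_lt.mp (by linarith)
    have haK2 : K₂ < idx x hex t + 1 := hx.lt_iff_lt.mp (by linarith)
    have hbK : idx x hex (-t) < K₁ := hx.lt_iff_lt.mp (by linarith)
    have hbK2 : K₂ < idx x hex (-t) + 1 := hx.lt_iff_lt.mp (by linarith)
    unfold DD dd ee
    refine le_min (le_min ?_ ?_) (le_min ?_ ?_) <;>
      [exact hmem _ (by omega) (by omega); exact hmem _ (by omega) (by omega);
       exact hmem _ (by omega) (by omega); exact hmem _ (by omega) (by omega)]
  set c := min (LL x hex M 0) (δ/(4*M)) with hc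
  have hcpos : 0 < c :=
    lt_min (LL_pos x hex hM hlenpos 0) (div_pos hδpos (by linarith))
  have hLc : ∀ n, c ≤ LL x hex M n := by
    intro n
    induction n with
    | zero => exact min_le_left _ _
    | succ n ih =>
      rw [LL_succ]
      refine le_min ih ?_
      have hY1 := YY_ge_one x hex hM hlenpos (n+1)
      have hY2 := hub (n+1)
      have hD := hDD _ hY1 hY2
      have hPP := lt_PP x hex hM hlenpos (YY x hex M (n+1))
      have : δ / (4*M) ≤ PP x hex M (YY x hex M (n+1)) := by
        rw [div_le_iff₀ (by linarith : (0:ℝ) < 4*M)]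
        nlinarith
      exact le_trans (min_le_right _ _) this
  have hYlb : ∀ n : ℕ, 1 + n * c ≤ YY x hex M n := by
    intro n
    induction n with
    | zero => simp [YY_zero]
    | succ n ih =>
      rw [YY_succ]
      have := hLc n
      push_cast
      push_cast at ih
      linarith
  obtain ⟨n, hn⟩ := exists_nat_gt ((l - 1)/c)
  have : (l-1)/c * c < n * c := by
    apply mul_lt_mul_of_pos_right hn hcpos
  rw [div_mul_cancel₀ _ (ne_of_gt hcpos)] at this
  have := hYlb n
  have := hub n
  linarith

end Invariants

end S6

set_option maxHeartbeats 2000000 in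
/-- Given a bounded-geometry partition of `ℝ` (endpoints `x : ℤ → ℝ`, intervals
`I_j = (x j, x (j+1))`, bounded geometry constant `C`) normalized by `x 0 = -1`,
`x 1 = 1`, and given `M > 1`, there is a refined partition `y : ℤ → ℝ` that
contains `(-1,1)` as a partition interval, is symmetric about `0`, has
non-increasing lengths away from `0`, all lengths (except for the central
interval) integer powers of `2`, every non-central new interval meeting an old
interval `I_k` has length less than `|I_k|/M`, and whose bounded geometry
constant `C'` depends only on `C` and `M`. -/
theorem statement6 (C M : ℝ) (hC : 1 ≤ C) (hM : 1 < M) :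
    ∃ C' : ℝ, 0 < C' ∧
      ∀ x : ℤ → ℝ, StrictMono x → x 0 = -1 → x 1 = 1 →
        Tendsto x atTop atTop → Tendsto x atBot atBot →
        (∀ j : ℤ, 1 / C ≤ (x (j+2) - x (j+1)) / (x (j+1) - x j) ∧
                  (x (j+2) - x (j+1)) / (x (j+1) - x j) ≤ C) →
        ∃ y : ℤ → ℝ, StrictMono y ∧
          Tendsto y atTop atTop ∧ Tendsto y atBot atBot ∧
          -- (1) `(-1,1)` is an interval of the new partition
          y 0 = -1 ∧ y 1 = 1 ∧
          -- (2) the partition is symmetric about `0`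
          (∀ j : ℤ, y (1 - j) = -(y j)) ∧
          -- (3) the lengths are non-increasing away from the central interval
          y 1 - y 0 = 2 ∧ y 2 - y 1 ≤ 2 ∧
          (∀ j : ℤ, 1 ≤ j → y (j+2) - y (j+1) ≤ y (j+1) - y j) ∧
          -- (4) all non-central lengths are integer powers of `2`
          (∀ j : ℤ, j ≠ 0 → ∃ n : ℤ, y (j+1) - y j = 2 ^ n) ∧
          -- (5) any non-central new interval meeting an old interval is shorter
          -- than it by the factor `M`
          (∀ j : ℤ, j ≠ 0 → ∀ k : ℤ,
            (Ioo (y j) (y (j+1)) ∩ Ioo (x k) (x (k+1))).Nonempty →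
            y (j+1) - y j < (x (k+1) - x k) / M) ∧
          -- (6) bounded geometry with constant `C'` depending only on `C, M`
          (∀ j : ℤ, 1 / C' ≤ (y (j+2) - y (j+1)) / (y (j+1) - y j) ∧
                    (y (j+2) - y (j+1)) / (y (j+1) - y j) ≤ C') := by
  classical
  have hC0 : (0:ℝ) < C := by linarith
  have hM0 : (0:ℝ) < M := by linarith
  refine ⟨4 * M * C^2, by positivity, ?_⟩
  intro x hx hx0 hx1 hxT hxB hbg
  -- existence of the index function
  have hex : ∀ t : ℝ, ∃ k : ℤ, x k ≤ t ∧ t < x (k + 1) := by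
    intro t
    obtain ⟨a, ha⟩ := (hxB.eventually_le_atBot t).exists
    obtain ⟨b, hb⟩ := (hxT.eventually_gt_atTop t).exists
    obtain ⟨k₀, hk₀, hk₀max⟩ := Int.exists_greatest_of_bdd
      (P := fun k => x k ≤ t)
      ⟨b, fun z hz => le_of_lt (hx.lt_iff_lt.mp (lt_of_le_of_lt hz hb))⟩ ⟨a, ha⟩
    refine ⟨k₀, hk₀, ?_⟩
    by_contra hcon
    push_neg at hcon
    have := hk₀max (k₀+1) hcon
    omega
  -- length facts
  have hlenpos : ∀ k, 0 < S6.len x k := fun k => sub_pos.2 (hx (by omega : k < k + 1))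
  have hbg' : ∀ k : ℤ, 1 / C ≤ S6.len x (k+1) / S6.len x k ∧
      S6.len x (k+1) / S6.len x k ≤ C := by
    intro k
    have := hbg k
    have e1 : k + 2 = k + 1 + 1 := by ring
    rw [e1] at this
    exact this
  have hlen1 : ∀ k, S6.len x k ≤ C * S6.len x (k+1) := by
    intro k
    have h := (hbg' k).1
    have h0 := hlenpos k
    have h1 := hlenpos (k+1)
    rw [div_le_div_iff₀ hC0 h0] at h
    nlinarith
  have hlen2 : ∀ k, S6.len x (k+1) ≤ C * S6.len x k := by
    intro k
    have h := (hbg' k).2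
    have h0 := hlenpos k
    rw [div_le_iff₀ h0] at h
    nlinarith
  -- the new partition: opaque interface
  obtain ⟨Y, L, hYsucc, hY0, hLpos, hLanti, hLratio, hL0two, hL0low, hYtop,
      hLpow2, hp5p, hp5n⟩ :
      ∃ (Y : ℕ → ℝ) (L : ℕ → ℝ),
        (∀ n : ℕ, Y (n+1) = Y n + L n) ∧ Y 0 = 1 ∧ (∀ n, 0 < L n) ∧
        (∀ n, L (n+1) ≤ L n) ∧ (∀ n, L n ≤ 2*C*L (n+1)) ∧ L 0 ≤ 2 ∧
        1 ≤ 2*M*C^2*L 0 ∧ Tendsto Y atTop atTop ∧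
        (∀ n, ∃ m : ℤ, L n = 2 ^ m) ∧
        (∀ (n : ℕ) (k : ℤ),
          (Ioo (Y n) (Y n + L n) ∩ Ioo (x k) (x (k+1))).Nonempty →
          M * L n < x (k+1) - x k) ∧
        (∀ (n : ℕ) (k : ℤ),
          (Ioo (-(Y n) - L n) (-(Y n)) ∩ Ioo (x k) (x (k+1))).Nonempty →
          M * L n < x (k+1) - x k) :=
    ⟨S6.YY x hex M, S6.LL x hex M, fun n => rfl, rfl,
      S6.LL_pos x hex hM hlenpos, fun n => S6.LL_antitone x hex n,
      S6.LL_ratio x hex hC hM hx hlenpos hlen1 hlen2, S6.LL_le_two x hex 0,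
      S6.LL_zero_lower x hex hC hM hx hlenpos hlen1 hlen2 hx0 hx1,
      S6.YY_tendsto x hex hC hM hx hlenpos hlen1 hlen2 hxT hxB,
      fun n => S6.LL_pow2 x hex n,
      fun n k h => by
        have := S6.prop5pos x hex hM hx hlenpos n k h
        unfold S6.len at this; linarith,
      fun n k h => by
        have := S6.prop5neg x hex hM hx hlenpos n k h
        unfold S6.len at this; linarith⟩
  set y : ℤ → ℝ := fun j => if 1 ≤ j then Y (j-1).toNat else -(Y (-j).toNat) with hy
  have hyp : ∀ j : ℤ, 1 ≤ j → y j = Y (j-1).toNat := by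
    intro j hj; simp only [hy]; rw [if_pos hj]
  have hyn : ∀ j : ℤ, j ≤ 0 → y j = -(Y (-j).toNat) := by
    intro j hj; simp only [hy]; rw [if_neg (by omega)]
  -- length formulas
  have hdp : ∀ j : ℤ, 1 ≤ j → y (j+1) - y j = L (j-1).toNat := by
    intro j hj
    rw [hyp j hj, hyp (j+1) (by omega)]
    have e1 : (j+1-1).toNat = (j-1).toNat + 1 := by omega
    rw [e1, hYsucc]
    ring
  have hd0 : y 1 - y 0 = 2 := by
    rw [hyp 1 le_rfl, hyn 0 le_rfl]
    norm_num [hY0]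
  have hdn : ∀ j : ℤ, j ≤ -1 → y (j+1) - y j = L (-j-1).toNat := by
    intro j hj
    rw [hyn j (by omega), hyn (j+1) (by omega)]
    have e1 : (-j).toNat = (-(j+1)).toNat + 1 := by omega
    have e2 : (-(j+1)).toNat = (-j-1).toNat := by omega
    rw [e1, hYsucc, e2]
    ring
  have hd1 : y 2 - y 1 = L 0 := by
    have h := hdp 1 le_rfl
    norm_num at h
    convert h using 3 <;> norm_num
  have hdm1 : y 0 - y (-1) = L 0 := by
    have h := hdn (-1) le_rfl
    norm_num at h
    convert h using 3 <;> norm_num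
  have hdpos : ∀ j : ℤ, 0 < y (j+1) - y j := by
    intro j
    rcases le_or_gt 1 j with hj | hj
    · rw [hdp j hj]; exact hLpos _
    rcases eq_or_lt_of_le (by omega : j ≤ 0) with rfl | hj'
    · simp only [zero_add]; rw [hd0]; norm_num
    · rw [hdn j (by omega)]; exact hLpos _
  have hmono : StrictMono y := strictMono_int_of_lt_succ (fun j => by
    have := hdpos j; linarith)
  -- symmetry
  have hsym : ∀ j : ℤ, y (1 - j) = -(y j) := by
    intro j
    rcases le_or_gt 1 j with hj | hj
    · rw [hyn (1-j) (by omega), hyp j hj]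
      have : (-(1-j)).toNat = (j-1).toNat := by omega
      rw [this]
    · rw [hyp (1-j) (by omega), hyn j (by omega)]
      have : (1-j-1).toNat = (-j).toNat := by omega
      rw [this]
      ring
  -- tendsto
  have hytop : Tendsto y atTop atTop := by
    rw [Filter.tendsto_atTop_atTop]
    intro b
    obtain ⟨N, hN⟩ := (Filter.tendsto_atTop_atTop.mp hYtop) b
    refine ⟨(N:ℤ)+1, fun j hj => ?_⟩
    rw [hyp j (by omega)]
    exact hN _ (by omega)
  have hybot : Tendsto y atBot atBot := by
    rw [Filter.tendsto_atBot_atBot]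
    intro b
    obtain ⟨N, hN⟩ := (Filter.tendsto_atTop_atTop.mp hYtop) (-b)
    refine ⟨-(N:ℤ), fun j hj => ?_⟩
    have h1 : y j = -(y (1-j)) := by rw [hsym j]; ring
    rw [h1, hyp (1-j) (by omega)]
    have := hN (1-j-1).toNat (by omega)
    linarith
  have hy0 : y 0 = -1 := by rw [hyn 0 le_rfl]; norm_num [hY0]
  have hy1 : y 1 = 1 := by rw [hyp 1 le_rfl]; norm_num [hY0]
  refine ⟨y, hmono, hytop, hybot, hy0, hy1, hsym, hd0, ?_, ?_, ?_, ?_, ?_⟩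
  · -- y 2 - y 1 ≤ 2
    rw [hd1]; exact hL0two
  · -- non-increasing
    intro j hj
    have e1 : j + 2 = (j+1) + 1 := by ring
    rw [e1, hdp (j+1) (by omega), hdp j hj]
    have e2 : (j+1-1).toNat = (j-1).toNat + 1 := by omega
    rw [e2]
    exact hLanti _
  · -- powers of two
    intro j hj
    rcases le_or_gt 1 j with h | h
    · rw [hdp j h]; exact hLpow2 _
    · rw [hdn j (by omega)]; exact hLpow2 _
  · -- property (5)
    intro j hj k hne
    rw [lt_div_iff₀ hM0]
    rcases le_or_gt 1 j with h | h
    · rw [hdp j h]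
      have hIoo : Ioo (y j) (y (j+1)) =
          Ioo (Y (j-1).toNat) (Y (j-1).toNat + L (j-1).toNat) := by
        rw [hyp j h, hyp (j+1) (by omega)]
        have e1 : (j+1-1).toNat = (j-1).toNat + 1 := by omega
        rw [e1, hYsucc]
      rw [hIoo] at hne
      have := hp5p (j-1).toNat k hne
      linarith
    · rw [hdn j (by omega)]
      set n := (-j-1).toNat with hn
      have hIoo : Ioo (y j) (y (j+1)) = Ioo (-(Y n) - L n) (-(Y n)) := by
        rw [hyn j (by omega), hyn (j+1) (by omega)]
        have e1 : (-j).toNat = n + 1 := by omega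
        have e2 : (-(j+1)).toNat = n := by omega
        rw [e1, e2, hYsucc]
        have e3 : -(Y n + L n) = -(Y n) - L n := by ring
        rw [e3]
      rw [hIoo] at hne
      have := hp5n n k hne
      linarith
  · -- property (6)
    intro j
    have hb := hdpos j
    have e1 : j + 2 = (j+1) + 1 := by ring
    have hCp : (0:ℝ) < 4 * M * C^2 := by positivity
    rw [e1]
    set a := y ((j+1)+1) - y (j+1) with hadef
    set b := y (j+1) - y j with hbdef
    suffices hkey : b ≤ (4*M*C^2) * a ∧ a ≤ (4*M*C^2) * b by
      obtain ⟨hk1, hk2⟩ := hkey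
      constructor
      · rw [div_le_div_iff₀ hCp hb]
        nlinarith
      · rw [div_le_iff₀ hb]
        exact hk2
    have key : 2*C ≤ 4*M*C^2 := by nlinarith
    have hge : (1:ℝ) ≤ 4*M*C^2 := by nlinarith
    have hgen : ∀ u v : ℝ, 0 < u → 0 < v → v ≤ u → u ≤ 2*C*v →
        v ≤ (4*M*C^2)*u ∧ u ≤ (4*M*C^2)*v := by
      intro u v hu hv h1 h2
      constructor
      · nlinarith
      · nlinarith
    rcases le_or_gt 1 j with hj | hj
    · -- positive side
      have hA : a = L ((j-1).toNat + 1) := by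
        rw [hadef, hdp (j+1) (by omega)]
        congr 1
        omega
      have hB : b = L (j-1).toNat := by rw [hbdef, hdp j hj]
      rw [hA, hB]
      obtain ⟨p, q⟩ := hgen (L (j-1).toNat) (L ((j-1).toNat + 1))
        (hLpos _) (hLpos _) (hLanti _) (hLratio _)
      exact ⟨q, p⟩
    rcases eq_or_lt_of_le (by omega : j ≤ 0) with rfl | hj'
    · -- j = 0
      have hA : a = L 0 := by
        rw [hadef]; norm_num; rw [hd1]
      have hB : b = 2 := by rw [hbdef]; norm_num; rw [hd0]
      rw [hA, hB]
      have h4 := hLpos 0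
      constructor
      · nlinarith [hL0two, hge]
      · nlinarith [hL0low]
    rcases eq_or_lt_of_le (by omega : j ≤ -1) with rfl | hj''
    · -- j = -1
      have hA : a = 2 := by
        rw [hadef]; norm_num; rw [hd0]
      have hB : b = L 0 := by
        rw [hbdef]; norm_num; rw [hdm1]
      rw [hA, hB]
      have h4 := hLpos 0
      constructor
      · nlinarith [hL0low]
      · nlinarith [hL0two, hge]
    · -- j ≤ -2
      have hA : a = L (-j-2).toNat := by
        rw [hadef, hdn (j+1) (by omega)]
        congr 1
        omega
      have hB : b = L ((-j-2).toNat + 1) := by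
        rw [hbdef, hdn j (by omega)]
        congr 1
        omega
      rw [hA, hB]
      obtain ⟨p, q⟩ := hgen (L (-j-2).toNat) (L ((-j-2).toNat + 1))
        (hLpos _) (hLpos _) (hLanti _) (hLratio _)
      exact ⟨p, q⟩
end

section
/- For every real r ≥ 2, the integral a(r) = ∫_{−1}^{0} ((x+1)(−x)(r−x)(r+1−x))^{−1/2} dx is finite and satisfies π/(r+2) ≤ a(r) ≤ π/r. -/
open MeasureTheory Set

-- Integrability of the dominating function
lemma aux_h_int : IntegrableOn
    (fun x : ℝ => Real.sqrt 2 * ((x + 1) ^ (-(1/2) : ℝ) + (-x) ^ (-(1/2) : ℝ)))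
    (Ioo (-1 : ℝ) 0) := by
  have h1 : IntervalIntegrable (fun x : ℝ => (x + 1) ^ (-(1/2) : ℝ)) volume (-1) 0 := by
    have := (intervalIntegral.intervalIntegrable_rpow' (a := 0) (b := 1)
      (r := (-(1/2) : ℝ)) (by norm_num)).comp_add_right 1
    simpa [show (-2:ℝ)+1 = -1 by norm_num, Real.arcsin_neg_one, Real.arcsin_one] using this
  have h2 : IntervalIntegrable (fun x : ℝ => (-x) ^ (-(1/2) : ℝ)) volume (-1) 0 := by
    have := (intervalIntegral.intervalIntegrable_rpow' (a := 1) (b := 0)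
      (r := (-(1/2) : ℝ)) (by norm_num)).comp_mul_left (c := -1)
    simpa [show (-2:ℝ)+1 = -1 by norm_num, Real.arcsin_neg_one, Real.arcsin_one] using this
  have := ((h1.add h2).const_mul (Real.sqrt 2))
  rw [intervalIntegrable_iff_integrableOn_Ioo_of_le (by norm_num)] at this
  exact this

lemma aux_half : ((1/2 : ℝ)) ^ (-(1/2) : ℝ) = Real.sqrt 2 := by
  rw [Real.sqrt_eq_rpow, one_div, Real.inv_rpow (by norm_num), ← Real.rpow_neg (by norm_num)]
  norm_num

-- pointwise bound for g
lemma aux_g_le_h {x : ℝ} (hx : x ∈ Ioo (-1 : ℝ) 0) :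
    ((x + 1) * (-x)) ^ (-(1/2) : ℝ)
      ≤ Real.sqrt 2 * ((x + 1) ^ (-(1/2) : ℝ) + (-x) ^ (-(1/2) : ℝ)) := by
  obtain ⟨hx1, hx2⟩ := hx
  have h1 : (0:ℝ) < x + 1 := by linarith
  have h2 : (0:ℝ) < -x := by linarith
  rw [Real.mul_rpow h1.le h2.le]
  have hp1 : 0 ≤ (x + 1) ^ (-(1/2) : ℝ) := Real.rpow_nonneg h1.le _
  have hp2 : 0 ≤ (-x) ^ (-(1/2) : ℝ) := Real.rpow_nonneg h2.le _
  rcases le_total (1/2 : ℝ) (-x) with h | h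
  · have : (-x) ^ (-(1/2) : ℝ) ≤ Real.sqrt 2 := by
      rw [← aux_half]
      exact Real.rpow_le_rpow_of_nonpos (by norm_num) h (by norm_num)
    nlinarith
  · have : (x + 1) ^ (-(1/2) : ℝ) ≤ Real.sqrt 2 := by
      rw [← aux_half]
      exact Real.rpow_le_rpow_of_nonpos (by norm_num) (by linarith) (by norm_num)
    nlinarith

lemma aux_g_int : IntegrableOn (fun x : ℝ => ((x + 1) * (-x)) ^ (-(1/2) : ℝ))
    (Ioo (-1 : ℝ) 0) := by
  apply Integrable.mono' aux_h_int
  · refine (ContinuousOn.rpow_const ?_ ?_).aestronglyMeasurable measurableSet_Ioo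
    · fun_prop
    · intro x hx
      left
      nlinarith [hx.1, hx.2]
  · filter_upwards [ae_restrict_mem measurableSet_Ioo] with x hx
    rw [Real.norm_eq_abs, abs_of_nonneg (Real.rpow_nonneg (by nlinarith [hx.1, hx.2] : (0:ℝ) ≤ (x+1)*(-x)) _)]
    exact aux_g_le_h hx

lemma aux_g_val : (∫ x in Ioo (-1 : ℝ) 0, ((x + 1) * (-x)) ^ (-(1/2) : ℝ)) = Real.pi := by
  have hint : IntervalIntegrable (fun x : ℝ => ((x + 1) * (-x)) ^ (-(1/2) : ℝ))
      volume (-1) 0 := by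
    rw [intervalIntegrable_iff_integrableOn_Ioo_of_le (by norm_num)]
    exact aux_g_int
  have hderiv : ∀ x ∈ Ioo (-1:ℝ) 0, HasDerivAt (fun x : ℝ => Real.arcsin (2*x+1))
      (((x + 1) * (-x)) ^ (-(1/2) : ℝ)) x := by
    intro x hx
    obtain ⟨hx1, hx2⟩ := hx
    have hA : (0:ℝ) < (x + 1) * (-x) := by nlinarith
    have hy1 : (2*x+1 : ℝ) ≠ -1 := by intro h; nlinarith [h]
    have hy2 : (2*x+1 : ℝ) ≠ 1 := by intro h; nlinarith [h]
    have hd := (Real.hasDerivAt_arcsin hy1 hy2).comp x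
      (((hasDerivAt_id x).const_mul 2).add_const 1)
    refine hd.congr_deriv ?_
    have hsq : 1 - (2*x+1)^2 = 4 * ((x + 1) * (-x)) := by ring
    rw [hsq, Real.sqrt_mul (by norm_num), show Real.sqrt 4 = 2 by
      rw [show (4:ℝ) = 2^2 by norm_num, Real.sqrt_sq (by norm_num)]]
    rw [Real.rpow_neg hA.le, ← Real.sqrt_eq_rpow]
    field_simp
  have ha : Filter.Tendsto (fun x : ℝ => Real.arcsin (2*x+1)) (nhdsWithin (-1) (Ioi (-1)))
      (nhds (-(Real.pi/2))) := by
    have hc : Continuous (fun x : ℝ => Real.arcsin (2*x+1)) :=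
      Real.continuous_arcsin.comp (by continuity)
    have := (hc.tendsto (-1)).mono_left (nhdsWithin_le_nhds (s := Ioi (-1)))
    simpa [show (-2:ℝ)+1 = -1 by norm_num, Real.arcsin_neg_one, Real.arcsin_one] using this
  have hb : Filter.Tendsto (fun x : ℝ => Real.arcsin (2*x+1)) (nhdsWithin 0 (Iio 0))
      (nhds (Real.pi/2)) := by
    have hc : Continuous (fun x : ℝ => Real.arcsin (2*x+1)) :=
      Real.continuous_arcsin.comp (by continuity)
    have := (hc.tendsto 0).mono_left (nhdsWithin_le_nhds (s := Iio 0))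
    simpa [show (-2:ℝ)+1 = -1 by norm_num, Real.arcsin_neg_one, Real.arcsin_one] using this
  have := intervalIntegral.integral_eq_sub_of_hasDerivAt_of_tendsto (by norm_num : (-1:ℝ) < 0)
    hderiv hint ha hb
  rw [intervalIntegral.integral_of_le (by norm_num : (-1:ℝ) ≤ 0),
    MeasureTheory.integral_Ioc_eq_integral_Ioo] at this
  rw [this]; ring

/-- For `r ≥ 2`, the integral
`a(r) = ∫_{-1}^{0} ((x+1)(-x)(r-x)(r+1-x))^{-1/2} dx`
is finite and satisfies `π/(r+2) ≤ a(r) ≤ π/r`. -/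
theorem statement8 (r : ℝ) (hr : 2 ≤ r) :
    IntegrableOn
      (fun x : ℝ => ((x + 1) * (-x) * (r - x) * (r + 1 - x)) ^ (-(1/2) : ℝ))
      (Ioo (-1 : ℝ) 0) ∧
    Real.pi / (r + 2) ≤
      (∫ x in Ioo (-1 : ℝ) 0,
        ((x + 1) * (-x) * (r - x) * (r + 1 - x)) ^ (-(1/2) : ℝ)) ∧
    (∫ x in Ioo (-1 : ℝ) 0,
        ((x + 1) * (-x) * (r - x) * (r + 1 - x)) ^ (-(1/2) : ℝ)) ≤ Real.pi / r := by
  set c₁ : ℝ := ((r+1)*(r+2)) ^ (-(1/2) : ℝ) with hc₁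
  set c₂ : ℝ := (r*(r+1)) ^ (-(1/2) : ℝ) with hc₂
  have hr0 : (0:ℝ) < r := by linarith
  have hrl : (0:ℝ) < r*(r+1) := by nlinarith
  have hru : (0:ℝ) < (r+1)*(r+2) := by nlinarith
  have hsplit : ∀ x ∈ Ioo (-1:ℝ) 0,
      ((x + 1) * (-x) * (r - x) * (r + 1 - x)) ^ (-(1/2) : ℝ)
        = ((r - x) * (r + 1 - x)) ^ (-(1/2) : ℝ) * ((x + 1) * (-x)) ^ (-(1/2) : ℝ) := by
    intro x hx
    obtain ⟨hx1, hx2⟩ := hx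
    rw [show (x + 1) * (-x) * (r - x) * (r + 1 - x)
        = ((r - x) * (r + 1 - x)) * ((x + 1) * (-x)) by ring,
      Real.mul_rpow (by nlinarith) (by nlinarith)]
  have hup : ∀ x ∈ Ioo (-1:ℝ) 0,
      ((x + 1) * (-x) * (r - x) * (r + 1 - x)) ^ (-(1/2) : ℝ)
        ≤ c₂ * ((x + 1) * (-x)) ^ (-(1/2) : ℝ) := by
    intro x hx
    obtain ⟨hx1, hx2⟩ := hx
    rw [hsplit x ⟨hx1, hx2⟩]
    apply mul_le_mul_of_nonneg_right _ (Real.rpow_nonneg (by nlinarith) _)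
    exact Real.rpow_le_rpow_of_nonpos hrl (by nlinarith) (by norm_num)
  have hlo : ∀ x ∈ Ioo (-1:ℝ) 0,
      c₁ * ((x + 1) * (-x)) ^ (-(1/2) : ℝ)
        ≤ ((x + 1) * (-x) * (r - x) * (r + 1 - x)) ^ (-(1/2) : ℝ) := by
    intro x hx
    obtain ⟨hx1, hx2⟩ := hx
    rw [hsplit x ⟨hx1, hx2⟩]
    apply mul_le_mul_of_nonneg_right _ (Real.rpow_nonneg (by nlinarith) _)
    exact Real.rpow_le_rpow_of_nonpos (by nlinarith) (by nlinarith) (by norm_num)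
  have hfint : IntegrableOn
      (fun x : ℝ => ((x + 1) * (-x) * (r - x) * (r + 1 - x)) ^ (-(1/2) : ℝ))
      (Ioo (-1 : ℝ) 0) := by
    apply Integrable.mono' (aux_g_int.const_mul c₂)
    · refine (ContinuousOn.rpow_const ?_ ?_).aestronglyMeasurable measurableSet_Ioo
      · fun_prop
      · intro x hx
        left
        obtain ⟨hx1, hx2⟩ := hx
        have hP : 0 < (x + 1) * (-x) * (r - x) * (r + 1 - x) :=
          mul_pos (mul_pos (mul_pos (by linarith) (by linarith)) (by linarith)) (by linarith)
        exact ne_of_gt hP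
    · filter_upwards [ae_restrict_mem measurableSet_Ioo] with x hx
      obtain ⟨hx1, hx2⟩ := hx
      have hP : 0 < (x + 1) * (-x) * (r - x) * (r + 1 - x) :=
        mul_pos (mul_pos (mul_pos (by linarith) (by linarith)) (by linarith)) (by linarith)
      rw [Real.norm_eq_abs, abs_of_nonneg (Real.rpow_nonneg hP.le _)]
      exact hup x ⟨hx1, hx2⟩
  refine ⟨hfint, ?_, ?_⟩
  · have h1 : c₁ * Real.pi ≤ ∫ x in Ioo (-1 : ℝ) 0,
        ((x + 1) * (-x) * (r - x) * (r + 1 - x)) ^ (-(1/2) : ℝ) := by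
      rw [← aux_g_val, ← MeasureTheory.integral_const_mul]
      exact setIntegral_mono_on (aux_g_int.const_mul c₁) hfint measurableSet_Ioo hlo
    refine le_trans ?_ h1
    have hsq : Real.sqrt ((r+1)*(r+2)) ≤ r + 2 := by
      have h := Real.sqrt_le_sqrt (show (r+1)*(r+2) ≤ (r+2)^2 by nlinarith)
      rwa [Real.sqrt_sq (by linarith)] at h
    have hc : (r+2)⁻¹ ≤ c₁ := by
      rw [hc₁, Real.rpow_neg hru.le, ← Real.sqrt_eq_rpow]
      exact inv_anti₀ (Real.sqrt_pos.mpr hru) hsq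
    rw [div_eq_mul_inv, mul_comm c₁ Real.pi]
    exact mul_le_mul_of_nonneg_left hc Real.pi_pos.le
  · have h2 : (∫ x in Ioo (-1 : ℝ) 0,
        ((x + 1) * (-x) * (r - x) * (r + 1 - x)) ^ (-(1/2) : ℝ)) ≤ c₂ * Real.pi := by
      rw [← aux_g_val, ← MeasureTheory.integral_const_mul]
      exact setIntegral_mono_on hfint (aux_g_int.const_mul c₂) measurableSet_Ioo hup
    refine h2.trans ?_
    have hsq : r ≤ Real.sqrt (r*(r+1)) := by
      have h := Real.sqrt_le_sqrt (show r^2 ≤ r*(r+1) by nlinarith)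
      rwa [Real.sqrt_sq hr0.le] at h
    have hc : c₂ ≤ r⁻¹ := by
      rw [hc₂, Real.rpow_neg hrl.le, ← Real.sqrt_eq_rpow]
      exact inv_anti₀ hr0 hsq
    rw [div_eq_mul_inv, mul_comm c₂ Real.pi]
    exact mul_le_mul_of_nonneg_left hc Real.pi_pos.le
end

section
/- There exist absolute constants 0 < c ≤ C < ∞ such that for every real r ≥ 2, the integral b(r) = ∫_{0}^{r} ((x+1)·x·(r−x)·(r+1−x))^{−1/2} dx is finite and satisfies c·(1 + log r)/r ≤ b(r) ≤ C·(1 + log r)/r. -/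
open MeasureTheory Set

private lemma rpow_neg_half_eq' {x : ℝ} (hx : 0 ≤ x) :
    x ^ (-(1/2) : ℝ) = (Real.sqrt x)⁻¹ := by
  rw [Real.rpow_neg hx, ← Real.sqrt_eq_rpow]

private lemma sq_rpow_neg_half' {a : ℝ} (ha : 0 < a) :
    (a ^ 2 : ℝ) ^ (-(1/2) : ℝ) = a⁻¹ := by
  rw [← Real.rpow_natCast a 2, ← Real.rpow_mul ha.le]
  norm_num [Real.rpow_neg_one]

private lemma lower_integral {r : ℝ} (hr : 2 ≤ r) :
    IntervalIntegrable (fun x : ℝ => ((x + 1/2) * (r + 1/2 - x))⁻¹) volume 0 r ∧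
    ∫ x in (0:ℝ)..r, ((x + 1/2) * (r + 1/2 - x))⁻¹
      = (2/(r+1)) * (Real.log (r + 1/2) - Real.log (1/2)) := by
  have hr0 : (0:ℝ) ≤ r := by linarith
  have hcont : ContinuousOn (fun x : ℝ => ((x + 1/2) * (r + 1/2 - x))⁻¹) (Icc 0 r) := by
    apply ContinuousOn.inv₀
    · fun_prop
    · intro x hx
      have h1 : 0 < x + 1/2 := by linarith [hx.1]
      have h2 : 0 < r + 1/2 - x := by linarith [hx.2]
      positivity
  have hint : IntervalIntegrable (fun x : ℝ => ((x + 1/2) * (r + 1/2 - x))⁻¹) volume 0 r :=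
    ContinuousOn.intervalIntegrable (by rw [uIcc_of_le hr0]; exact hcont)
  refine ⟨hint, ?_⟩
  have hderiv : ∀ x ∈ Ioo (0:ℝ) r,
      HasDerivAt (fun y : ℝ => (r+1)⁻¹ * (Real.log (y + 1/2) - Real.log (r + 1/2 - y)))
        (((x + 1/2) * (r + 1/2 - x))⁻¹) x := by
    intro x hx
    have h1 : 0 < x + 1/2 := by linarith [hx.1]
    have h2 : 0 < r + 1/2 - x := by linarith [hx.2]
    have hr1 : (0:ℝ) < r + 1 := by linarith
    have d1 : HasDerivAt (fun y : ℝ => Real.log (y + 1/2)) ((x+1/2)⁻¹) x := by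
      have := (Real.hasDerivAt_log h1.ne').comp x ((hasDerivAt_id x).add_const (1/2))
      simpa [Function.comp_def] using this
    have d2 : HasDerivAt (fun y : ℝ => Real.log (r + 1/2 - y)) (-(r+1/2-x)⁻¹) x := by
      have := (Real.hasDerivAt_log h2.ne').comp x ((hasDerivAt_id x).const_sub (r+1/2))
      simpa [Function.comp_def] using this
    have h3 := (d1.sub d2).const_mul (r+1)⁻¹
    refine h3.congr_deriv (Eq.symm ?_)
    rw [sub_neg_eq_add, inv_add_inv h1.ne' h2.ne']
    have e : x + 1/2 + (r + 1/2 - x) = r + 1 := by ring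
    rw [e, ← mul_div_assoc, inv_mul_cancel₀ hr1.ne', one_div, one_div]
  have c1 : ContinuousOn (fun y : ℝ => Real.log (y + 1/2)) (Icc 0 r) :=
    ContinuousOn.log (by fun_prop)
      (fun x hx => by have h : 0 < x + 1/2 := by linarith [hx.1]
                      exact h.ne')
  have c2 : ContinuousOn (fun y : ℝ => Real.log (r + 1/2 - y)) (Icc 0 r) :=
    ContinuousOn.log (by fun_prop)
      (fun x hx => by have h : 0 < r + 1/2 - x := by linarith [hx.2]
                      exact h.ne')
  have hcontF : ContinuousOn
      (fun y : ℝ => (r+1)⁻¹ * (Real.log (y + 1/2) - Real.log (r + 1/2 - y))) (Icc 0 r) :=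
    continuousOn_const.mul (c1.sub c2)
  rw [intervalIntegral.integral_eq_sub_of_hasDerivAt_of_le hr0 hcontF hderiv hint]
  have e1 : r + 1/2 - 0 = r + 1/2 := by ring
  have e2 : r + 1/2 - r = 1/2 := by ring
  have e3 : (0:ℝ) + 1/2 = 1/2 := by ring
  rw [e1, e2, e3]
  have hr1 : r + 1 ≠ 0 := by positivity
  field_simp
  ring
private lemma hasDeriv_asinh {x : ℝ} (hx : 0 < x) :
    HasDerivAt (fun y : ℝ => 2 * Real.log (Real.sqrt y + Real.sqrt (y+1)))
      (Real.sqrt x * Real.sqrt (x+1))⁻¹ x := by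
  have hx1 : (0:ℝ) < x + 1 := by linarith
  have h1 : HasDerivAt (fun y : ℝ => Real.sqrt y) (1 / (2 * Real.sqrt x)) x :=
    Real.hasDerivAt_sqrt hx.ne'
  have h2 : HasDerivAt (fun y : ℝ => Real.sqrt (y+1)) (1 / (2 * Real.sqrt (x+1))) x := by
    have := (Real.hasDerivAt_sqrt hx1.ne').comp x ((hasDerivAt_id x).add_const 1)
    simpa [Function.comp_def] using this
  have sx : 0 < Real.sqrt x := Real.sqrt_pos.2 hx
  have sx1 : 0 < Real.sqrt (x+1) := Real.sqrt_pos.2 hx1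
  have hs : 0 < Real.sqrt x + Real.sqrt (x+1) := by linarith
  have h3 := ((h1.add h2).log hs.ne').const_mul 2
  refine h3.congr_deriv (Eq.symm ?_)
  simp only [Pi.add_apply]
  field_simp
  ring

private lemma hasDeriv_asinh_rev {r x : ℝ} (hx : x < r) :
    HasDerivAt (fun y : ℝ => -2 * Real.log (Real.sqrt (r - y) + Real.sqrt (r + 1 - y)))
      (Real.sqrt (r - x) * Real.sqrt (r + 1 - x))⁻¹ x := by
  have h0 : 0 < r - x := by linarith
  have h01 : 0 < r + 1 - x := by linarith
  have d1 : HasDerivAt (fun y : ℝ => Real.sqrt (r - y)) (-(1 / (2 * Real.sqrt (r - x)))) x := by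
    have := (Real.hasDerivAt_sqrt h0.ne').comp x ((hasDerivAt_id x).const_sub r)
    simpa [Function.comp_def] using this
  have d2 : HasDerivAt (fun y : ℝ => Real.sqrt (r + 1 - y)) (-(1 / (2 * Real.sqrt (r + 1 - x)))) x := by
    have := (Real.hasDerivAt_sqrt h01.ne').comp x ((hasDerivAt_id x).const_sub (r+1))
    simpa [Function.comp_def] using this
  have sx : 0 < Real.sqrt (r - x) := Real.sqrt_pos.2 h0
  have sx1 : 0 < Real.sqrt (r + 1 - x) := Real.sqrt_pos.2 h01
  have hs : 0 < Real.sqrt (r - x) + Real.sqrt (r + 1 - x) := by linarith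
  have h3 := ((d1.add d2).log hs.ne').const_mul (-2)
  refine h3.congr_deriv (Eq.symm ?_)
  simp only [Pi.add_apply]
  field_simp
  ring

private lemma upper_integral {r : ℝ} (hr : 2 ≤ r) :
    IntervalIntegrable (fun x : ℝ => (2/r) * ((Real.sqrt x * Real.sqrt (x+1))⁻¹
        + (Real.sqrt (r-x) * Real.sqrt (r+1-x))⁻¹)) volume 0 r ∧
    (∫ x in (0:ℝ)..r, (2/r) * ((Real.sqrt x * Real.sqrt (x+1))⁻¹
        + (Real.sqrt (r-x) * Real.sqrt (r+1-x))⁻¹))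
      = (8/r) * Real.log (Real.sqrt r + Real.sqrt (r+1)) := by
  have hr0 : (0:ℝ) < r := by linarith
  set g : ℝ → ℝ := fun x => (2/r) * ((Real.sqrt x * Real.sqrt (x+1))⁻¹
        + (Real.sqrt (r-x) * Real.sqrt (r+1-x))⁻¹) with hg
  -- integrability of g via domination
  have hb1 : IntervalIntegrable (fun x : ℝ => x ^ (-(1/2):ℝ)) volume 0 r :=
    intervalIntegral.intervalIntegrable_rpow' (by norm_num)
  have hb2 : IntervalIntegrable (fun x : ℝ => (r - x) ^ (-(1/2):ℝ)) volume 0 r := by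
    have := (intervalIntegral.intervalIntegrable_rpow' (a := 0) (b := r) (r := (-(1/2):ℝ))
      (by norm_num)).comp_sub_left r
    simpa using this.symm
  have hbnd : IntervalIntegrable
      (fun x : ℝ => (2/r) * (x ^ (-(1/2):ℝ) + (r - x) ^ (-(1/2):ℝ))) volume 0 r :=
    (hb1.add hb2).const_mul _
  have hgm : AEStronglyMeasurable g (volume.restrict (Set.uIoc (0:ℝ) r)) := by
    apply Measurable.aestronglyMeasurable
    fun_prop
  have hgint : IntervalIntegrable g volume 0 r := by
    apply hbnd.mono_fun hgm
    filter_upwards [ae_restrict_mem measurableSet_uIoc] with x hx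
    rw [uIoc_of_le hr0.le] at hx
    have hx0 : 0 < x := hx.1
    have hxr : x ≤ r := hx.2
    have t1 : (Real.sqrt x * Real.sqrt (x+1))⁻¹ ≤ x ^ (-(1/2):ℝ) := by
      rw [rpow_neg_half_eq' hx0.le]
      apply inv_anti₀ (Real.sqrt_pos.2 hx0)
      nlinarith [Real.sqrt_nonneg x, Real.one_le_sqrt.2 (by linarith : (1:ℝ) ≤ x + 1),
        Real.sqrt_pos.2 hx0]
    have t2 : (Real.sqrt (r-x) * Real.sqrt (r+1-x))⁻¹ ≤ (r - x) ^ (-(1/2):ℝ) := by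
      rcases eq_or_lt_of_le hxr with h | h
      · simp [← h, Real.zero_rpow (by norm_num : (-(1/2):ℝ) ≠ 0)]
      · rw [rpow_neg_half_eq' (by linarith : (0:ℝ) ≤ r - x)]
        apply inv_anti₀ (Real.sqrt_pos.2 (by linarith))
        nlinarith [Real.sqrt_nonneg (r-x), Real.one_le_sqrt.2 (by linarith : (1:ℝ) ≤ r + 1 - x),
          Real.sqrt_pos.2 (show (0:ℝ) < r - x by linarith)]
    have hgnn : 0 ≤ g x := by
      have := Real.sqrt_nonneg x
      positivity
    have hbnn : 0 ≤ (2/r) * (x ^ (-(1/2):ℝ) + (r - x) ^ (-(1/2):ℝ)) := by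
      have h1 : (0:ℝ) ≤ x ^ (-(1/2):ℝ) := Real.rpow_nonneg hx0.le _
      have h2 : (0:ℝ) ≤ (r-x) ^ (-(1/2):ℝ) := Real.rpow_nonneg (by linarith) _
      positivity
    rw [Real.norm_eq_abs, Real.norm_eq_abs, abs_of_nonneg hgnn, abs_of_nonneg hbnn]
    have : g x = (2/r) * ((Real.sqrt x * Real.sqrt (x+1))⁻¹
        + (Real.sqrt (r-x) * Real.sqrt (r+1-x))⁻¹) := rfl
    rw [this]
    have h2r : (0:ℝ) ≤ 2/r := by positivity
    exact mul_le_mul_of_nonneg_left (add_le_add t1 t2) h2r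
  refine ⟨hgint, ?_⟩
  -- FTC
  set F : ℝ → ℝ := fun y => (2/r) * ((2 * Real.log (Real.sqrt y + Real.sqrt (y+1)))
      + (-2 * Real.log (Real.sqrt (r - y) + Real.sqrt (r + 1 - y)))) with hF
  have hderiv : ∀ x ∈ Ioo (0:ℝ) r, HasDerivAt F (g x) x := by
    intro x hx
    exact ((hasDeriv_asinh hx.1).add (hasDeriv_asinh_rev hx.2)).const_mul (2/r)
  have hc1 : ContinuousOn (fun y : ℝ => Real.log (Real.sqrt y + Real.sqrt (y+1))) (Icc 0 r) := by
    apply ContinuousOn.log (by fun_prop)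
    intro x hx
    have h1 : 0 < Real.sqrt (x+1) := Real.sqrt_pos.2 (by linarith [hx.1])
    have h2 : 0 ≤ Real.sqrt x := Real.sqrt_nonneg x
    linarith
  have hc2 : ContinuousOn (fun y : ℝ => Real.log (Real.sqrt (r - y) + Real.sqrt (r + 1 - y))) (Icc 0 r) := by
    apply ContinuousOn.log (by fun_prop)
    intro x hx
    have h1 : 0 < Real.sqrt (r + 1 - x) := Real.sqrt_pos.2 (by linarith [hx.2])
    have h2 : 0 ≤ Real.sqrt (r - x) := Real.sqrt_nonneg _
    linarith
  have hcontF : ContinuousOn F (Icc 0 r) :=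
    continuousOn_const.mul ((continuousOn_const.mul hc1).add (continuousOn_const.mul hc2))
  rw [intervalIntegral.integral_eq_sub_of_hasDerivAt_of_le hr0.le hcontF hderiv hgint]
  have e1 : r - r = (0:ℝ) := by ring
  have e2 : r + 1 - r = (1:ℝ) := by ring
  have e3 : r - 0 = r := by ring
  have e4 : r + 1 - 0 = r + 1 := by ring
  rw [hF]
  simp only [e1, e2, e3, e4, Real.sqrt_zero, Real.sqrt_one, zero_add, Real.log_one, mul_zero]
  ring_nf

/-- There are absolute constants `0 < c ≤ C < ∞` such that for every `r ≥ 2`, the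
integral `b(r) = ∫_{0}^{r} ((x+1)·x·(r-x)·(r+1-x))^{-1/2} dx` is finite and
satisfies `c(1+log r)/r ≤ b(r) ≤ C(1+log r)/r`. -/
theorem statement9 :
    ∃ c C : ℝ, 0 < c ∧ c ≤ C ∧
      ∀ r : ℝ, 2 ≤ r →
        IntegrableOn
          (fun x : ℝ => ((x + 1) * x * (r - x) * (r + 1 - x)) ^ (-(1/2) : ℝ))
          (Ioo (0 : ℝ) r) ∧
        c * (1 + Real.log r) / r ≤
          (∫ x in Ioo (0 : ℝ) r,
            ((x + 1) * x * (r - x) * (r + 1 - x)) ^ (-(1/2) : ℝ)) ∧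
        (∫ x in Ioo (0 : ℝ) r,
            ((x + 1) * x * (r - x) * (r + 1 - x)) ^ (-(1/2) : ℝ)) ≤
          C * (1 + Real.log r) / r := by
  refine ⟨1/2, 12, by norm_num, by norm_num, fun r hr => ?_⟩
  have hr0 : (0:ℝ) < r := by linarith
  -- pointwise upper bound
  have hfg : ∀ x ∈ Ioo (0:ℝ) r,
      ((x + 1) * x * (r - x) * (r + 1 - x)) ^ (-(1/2) : ℝ) ≤
        (2/r) * ((Real.sqrt x * Real.sqrt (x+1))⁻¹
          + (Real.sqrt (r-x) * Real.sqrt (r+1-x))⁻¹) := by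
    intro x hx
    obtain ⟨hx0, hxr⟩ := hx
    have t1 : (0:ℝ) ≤ (Real.sqrt x * Real.sqrt (x+1))⁻¹ := by positivity
    have t2 : (0:ℝ) ≤ (Real.sqrt (r-x) * Real.sqrt (r+1-x))⁻¹ := by positivity
    rcases le_total x (r/2) with h | h
    · have a1 : r/2 ≤ r - x := by linarith
      have a2 : r/2 ≤ r + 1 - x := by linarith
      have hP1 : (0:ℝ) < x*(x+1) := by nlinarith
      have a3 : (r/2)*(r/2) ≤ (r-x)*(r+1-x) :=
        mul_le_mul a1 a2 (by linarith) (by linarith)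
      have hkey : x*(x+1)*(r/2)^2 ≤ (x + 1) * x * (r - x) * (r + 1 - x) := by
        nlinarith [mul_le_mul_of_nonneg_left a3 hP1.le]
      have h1 := Real.rpow_le_rpow_of_nonpos (by positivity) hkey
        (by norm_num : (-(1/2):ℝ) ≤ 0)
      calc ((x + 1) * x * (r - x) * (r + 1 - x)) ^ (-(1/2) : ℝ)
          ≤ (x*(x+1)*(r/2)^2) ^ (-(1/2):ℝ) := h1
        _ = (2/r) * (Real.sqrt x * Real.sqrt (x+1))⁻¹ := by
            rw [Real.mul_rpow (by positivity) (by positivity),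
              sq_rpow_neg_half' (by positivity), rpow_neg_half_eq' (by positivity),
              Real.sqrt_mul hx0.le, inv_div]
            ring
        _ ≤ _ := by
            have h2r : (0:ℝ) ≤ 2/r := by positivity
            nlinarith [mul_nonneg h2r t2]
    · have a1 : r/2 ≤ x := h
      have hP2 : (0:ℝ) < (r-x)*(r+1-x) :=
        mul_pos (by linarith) (by linarith)
      have a3 : (r/2)*(r/2) ≤ x*(x+1) := by nlinarith
      have hkey : (r-x)*(r+1-x)*(r/2)^2 ≤ (x + 1) * x * (r - x) * (r + 1 - x) := by
        nlinarith [mul_le_mul_of_nonneg_left a3 hP2.le]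
      have h1 := Real.rpow_le_rpow_of_nonpos (mul_pos hP2 (by positivity)) hkey
        (by norm_num : (-(1/2):ℝ) ≤ 0)
      calc ((x + 1) * x * (r - x) * (r + 1 - x)) ^ (-(1/2) : ℝ)
          ≤ ((r-x)*(r+1-x)*(r/2)^2) ^ (-(1/2):ℝ) := h1
        _ = (2/r) * (Real.sqrt (r-x) * Real.sqrt (r+1-x))⁻¹ := by
            rw [Real.mul_rpow hP2.le (by positivity),
              sq_rpow_neg_half' (by positivity), rpow_neg_half_eq' hP2.le,
              Real.sqrt_mul (by linarith : (0:ℝ) ≤ r - x), inv_div]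
            ring
        _ ≤ _ := by
            have h2r : (0:ℝ) ≤ 2/r := by positivity
            nlinarith [mul_nonneg h2r t1]
  -- pointwise lower bound
  have hhf : ∀ x ∈ Ioo (0:ℝ) r,
      ((x + 1/2) * (r + 1/2 - x))⁻¹ ≤
        ((x + 1) * x * (r - x) * (r + 1 - x)) ^ (-(1/2) : ℝ) := by
    intro x hx
    obtain ⟨hx0, hxr⟩ := hx
    have hPpos : (0:ℝ) < (x + 1) * x * (r - x) * (r + 1 - x) :=
      mul_pos (mul_pos (mul_pos (by linarith : (0:ℝ) < x + 1) hx0)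
        (by linarith : (0:ℝ) < r - x)) (by linarith : (0:ℝ) < r + 1 - x)
    have hQpos : (0:ℝ) < (x + 1/2) * (r + 1/2 - x) := by
      have h1 : (0:ℝ) < x + 1/2 := by linarith
      have h2 : (0:ℝ) < r + 1/2 - x := by linarith
      positivity
    have e1 : (x+1)*x ≤ (x+1/2)^2 := by nlinarith
    have e2 : (r-x)*(r+1-x) ≤ (r+1/2-x)^2 := by nlinarith
    have hPQ : (x + 1) * x * (r - x) * (r + 1 - x) ≤ ((x + 1/2) * (r + 1/2 - x))^2 := by
      nlinarith [mul_le_mul e1 e2 (by nlinarith) (by positivity)]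
    have h1 := Real.rpow_le_rpow_of_nonpos hPpos hPQ (by norm_num : (-(1/2):ℝ) ≤ 0)
    rwa [sq_rpow_neg_half' hQpos] at h1
  obtain ⟨hgInt, hgVal⟩ := upper_integral hr
  obtain ⟨hhInt, hhVal⟩ := lower_integral hr
  have toIoo : ∀ {u : ℝ → ℝ}, IntervalIntegrable u volume 0 r → IntegrableOn u (Ioo 0 r) := by
    intro u h
    rw [intervalIntegrable_iff, uIoc_of_le hr0.le] at h
    exact h.mono_set Ioo_subset_Ioc_self
  have hgIoo := toIoo hgInt
  have hhIoo := toIoo hhInt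
  have hPpos : ∀ x ∈ Ioo (0:ℝ) r, (0:ℝ) < (x + 1) * x * (r - x) * (r + 1 - x) := by
    intro x hx
    obtain ⟨hx0, hxr⟩ := hx
    exact mul_pos (mul_pos (mul_pos (by linarith) hx0) (by linarith)) (by linarith)
  have hfm : AEStronglyMeasurable
      (fun x : ℝ => ((x + 1) * x * (r - x) * (r + 1 - x)) ^ (-(1/2) : ℝ))
      (volume.restrict (Ioo 0 r)) := by
    have h : Measurable (fun x : ℝ => (x + 1) * x * (r - x) * (r + 1 - x)) := by fun_prop
    exact (h.pow_const _).aestronglyMeasurable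
  have hfInt : IntegrableOn
      (fun x : ℝ => ((x + 1) * x * (r - x) * (r + 1 - x)) ^ (-(1/2) : ℝ)) (Ioo 0 r) := by
    apply Integrable.mono' hgIoo hfm
    filter_upwards [ae_restrict_mem measurableSet_Ioo] with x hx
    rw [Real.norm_eq_abs, abs_of_nonneg (Real.rpow_nonneg (hPpos x hx).le _)]
    exact hfg x hx
  refine ⟨hfInt, ?_, ?_⟩
  · -- lower bound
    have hmono := setIntegral_mono_on hhIoo hfInt measurableSet_Ioo hhf
    have hIl : (∫ x in Ioo (0:ℝ) r, ((x + 1/2) * (r + 1/2 - x))⁻¹)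
        = (2/(r+1)) * (Real.log (r + 1/2) - Real.log (1/2)) := by
      rw [← integral_Ioc_eq_integral_Ioo, ← intervalIntegral.integral_of_le hr0.le, hhVal]
    rw [hIl] at hmono
    refine le_trans ?_ hmono
    have hA : 0 ≤ Real.log r := Real.log_nonneg (by linarith)
    have hAB : Real.log r ≤ Real.log (r + 1/2) := Real.log_le_log hr0 (by linarith)
    have hl2 : (0.6931471803 : ℝ) < Real.log 2 := Real.log_two_gt_d9
    have hhalf : Real.log (1/2) = - Real.log 2 := by
      rw [one_div, Real.log_inv]
    rw [hhalf, sub_neg_eq_add]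
    have key : (1/2 * (1 + Real.log r)) * (r+1) ≤ (2 * (Real.log (r + 1/2) + Real.log 2)) * r := by
      nlinarith [mul_le_mul_of_nonneg_left hAB hr0.le,
        mul_le_mul_of_nonneg_left hl2.le hr0.le,
        mul_nonneg hA (by linarith : (0:ℝ) ≤ 3*r - 1)]
    have h2 := (div_le_div_iff₀ hr0 (by linarith : (0:ℝ) < r + 1)).2 key
    calc 1/2 * (1 + Real.log r) / r
        ≤ 2 * (Real.log (r + 1/2) + Real.log 2) / (r+1) := h2
      _ = 2/(r+1) * (Real.log (r + 1/2) + Real.log 2) := by ring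
  · -- upper bound
    have hmono := setIntegral_mono_on hfInt hgIoo measurableSet_Ioo hfg
    have hIu : (∫ x in Ioo (0:ℝ) r, (2/r) * ((Real.sqrt x * Real.sqrt (x+1))⁻¹
          + (Real.sqrt (r-x) * Real.sqrt (r+1-x))⁻¹))
        = (8/r) * Real.log (Real.sqrt r + Real.sqrt (r+1)) := by
      rw [← integral_Ioc_eq_integral_Ioo, ← intervalIntegral.integral_of_le hr0.le, hgVal]
    rw [hIu] at hmono
    refine hmono.trans ?_
    have hs1 : (0:ℝ) < Real.sqrt (r+1) := Real.sqrt_pos.2 (by linarith)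
    have hs0 : (0:ℝ) ≤ Real.sqrt r := Real.sqrt_nonneg r
    have hsum_pos : (0:ℝ) < Real.sqrt r + Real.sqrt (r+1) := by linarith
    have hle : Real.sqrt r + Real.sqrt (r+1) ≤ 2 * Real.sqrt (2*r) := by
      have b1 : Real.sqrt r ≤ Real.sqrt (2*r) := Real.sqrt_le_sqrt (by linarith)
      have b2 : Real.sqrt (r+1) ≤ Real.sqrt (2*r) := Real.sqrt_le_sqrt (by linarith)
      linarith
    have hL : Real.log (Real.sqrt r + Real.sqrt (r+1))
        ≤ Real.log 2 + (Real.log 2 + Real.log r)/2 := by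
      calc Real.log (Real.sqrt r + Real.sqrt (r+1))
          ≤ Real.log (2 * Real.sqrt (2*r)) := Real.log_le_log hsum_pos hle
        _ = Real.log 2 + Real.log (Real.sqrt (2*r)) :=
            Real.log_mul two_ne_zero (by positivity)
        _ = Real.log 2 + Real.log (2*r)/2 := by rw [Real.log_sqrt (by linarith)]
        _ = Real.log 2 + (Real.log 2 + Real.log r)/2 := by
            rw [Real.log_mul two_ne_zero hr0.ne']
    have hl2' : Real.log 2 ≤ 1 := by
      have := Real.log_two_lt_d9
      linarith
    have hA : 0 ≤ Real.log r := Real.log_nonneg (by linarith)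
    have key : 8 * Real.log (Real.sqrt r + Real.sqrt (r+1)) ≤ 12*(1+Real.log r) := by
      linarith
    calc (8/r) * Real.log (Real.sqrt r + Real.sqrt (r+1))
        = 8 * Real.log (Real.sqrt r + Real.sqrt (r+1)) / r := by ring
      _ ≤ 12*(1+Real.log r)/r := by gcongr
end

section
/- The Joukowski map g(z) = (z + 1/z)/2 restricted to the domain {z ∈ ℂ : |z| > 1} is a holomorphic bijection from {z ∈ ℂ : |z| > 1} onto ℂ ∖ [−1, 1], where [−1, 1] denotes the real segment {x ∈ ℝ : −1 ≤ x ≤ 1} viewed as a subset of ℂ. -/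
/-!
Since `g z = g w ↔ z = w ∨ z * w = 1` for nonzero `z, w`, the map `g` is injective on `{‖z‖ > 1}`
and every value of `g` is already taken on the closed exterior of the disk. On the unit circle
`z⁻¹ = conj z`, so `g z = Re z` and `g` maps the circle onto `[-1, 1]`; hence a point off the circle
never lands in `[-1, 1]`, and every point off `[-1, 1]`, whose preimages solve `z² - 2wz + 1 = 0`,
has a preimage of norm `> 1`.
-/

open Set Metric

section Field

variable {K : Type*} [Field K]

def joukowski (z : K) : K := (z + z⁻¹) / 2

theorem joukowski_inv (z : K) : joukowski z⁻¹ = joukowski z := by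
  simp only [joukowski, inv_inv, add_comm]

theorem joukowski_eq_joukowski_iff [NeZero (2 : K)] {z w : K} (hz : z ≠ 0) (hw : w ≠ 0) :
    joukowski z = joukowski w ↔ z = w ∨ z * w = 1 := by
  constructor
  · intro h
    have key : (z - w) * (z * w - 1) = 0 := by
      unfold joukowski at h
      field_simp at h
      linear_combination h
    rcases mul_eq_zero.mp key with h | h
    · exact .inl (sub_eq_zero.mp h)
    · exact .inr (sub_eq_zero.mp h)
  · rintro (rfl | h)
    · rfl
    · rw [← joukowski_inv w, eq_inv_of_mul_eq_one_left h]

theorem exists_joukowski_eq [IsAlgClosed K] [NeZero (2 : K)] (w : K) :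
    ∃ z ≠ 0, joukowski z = w := by
  obtain ⟨s, hs⟩ := IsAlgClosed.exists_pow_nat_eq (w ^ 2 - 1) two_pos
  have hprod : (w + s) * (w - s) = 1 := by linear_combination -hs
  refine ⟨w + s, left_ne_zero_of_mul_eq_one hprod, ?_⟩
  rw [joukowski, inv_eq_of_mul_eq_one_right hprod]
  field_simp
  ring

end Field

theorem differentiableAt_joukowski {z : ℂ} (hz : z ≠ 0) : DifferentiableAt ℂ joukowski z :=
  (differentiableAt_id.add (differentiableAt_inv hz)).div_const 2

theorem joukowski_of_norm_eq_one {z : ℂ} (hz : ‖z‖ = 1) : joukowski z = z.re := by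
  have hinv : z⁻¹ = (starRingEnd ℂ) z := by
    rw [Complex.inv_def, Complex.normSq_eq_norm_sq, hz]
    simp
  rw [joukowski, hinv, Complex.add_conj]
  push_cast
  ring

theorem joukowski_image_sphere :
    joukowski '' sphere (0 : ℂ) 1 = Complex.ofReal '' Icc (-1) 1 := by
  ext w
  constructor
  · rintro ⟨z, hz, rfl⟩
    rw [mem_sphere_zero_iff_norm] at hz
    exact ⟨z.re, abs_le.mp (hz ▸ Complex.abs_re_le_norm z), (joukowski_of_norm_eq_one hz).symm⟩
  · rintro ⟨x, hx, rfl⟩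
    have hu : ‖Complex.exp (Real.arccos x * Complex.I)‖ = 1 := Complex.norm_exp_ofReal_mul_I _
    refine ⟨_, mem_sphere_zero_iff_norm.mpr hu, ?_⟩
    rw [joukowski_of_norm_eq_one hu, Complex.exp_ofReal_mul_I_re, Real.cos_arccos hx.1 hx.2]

theorem joukowski_mem_segment_iff {z : ℂ} (hz : z ≠ 0) :
    joukowski z ∈ Complex.ofReal '' Icc (-1) 1 ↔ ‖z‖ = 1 := by
  rw [← joukowski_image_sphere]
  constructor
  · rintro ⟨u, hu, huz⟩
    rw [mem_sphere_zero_iff_norm] at hu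
    have hu0 : u ≠ 0 := norm_ne_zero_iff.mp (hu ▸ one_ne_zero)
    rcases (joukowski_eq_joukowski_iff hu0 hz).mp huz with rfl | h
    · exact hu
    · rw [eq_inv_of_mul_eq_one_right h, norm_inv, hu, inv_one]
  · intro h
    exact mem_image_of_mem _ (mem_sphere_zero_iff_norm.mpr h)

theorem ne_zero_of_one_lt_norm {z : ℂ} (h : 1 < ‖z‖) : z ≠ 0 :=
  norm_pos_iff.mp (one_pos.trans h)

/-- The Joukowski map `g(z) = (z + 1/z)/2` is a holomorphic bijection from the
exterior of the closed unit disk `{|z| > 1}` onto the complement in `ℂ` of the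
real segment `[-1, 1]`. -/
theorem statement10 :
    DifferentiableOn ℂ (fun z : ℂ => (z + z⁻¹) / 2) {z : ℂ | 1 < ‖z‖} ∧
    Set.BijOn (fun z : ℂ => (z + z⁻¹) / 2) {z : ℂ | 1 < ‖z‖}
      ((Complex.ofReal '' Icc (-1 : ℝ) 1)ᶜ) := by
  change DifferentiableOn ℂ joukowski _ ∧ BijOn joukowski _ _
  refine ⟨fun z hz => (differentiableAt_joukowski (ne_zero_of_one_lt_norm hz)).differentiableWithinAt,
    fun z hz => ?_, fun z hz w hw h => ?_, fun w hw => ?_⟩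
  · exact fun hmem => hz.ne' ((joukowski_mem_segment_iff (ne_zero_of_one_lt_norm hz)).mp hmem)
  · refine ((joukowski_eq_joukowski_iff (ne_zero_of_one_lt_norm hz)
      (ne_zero_of_one_lt_norm hw)).mp h).resolve_right fun h1 => ?_
    have hzw : 1 < ‖z * w‖ := norm_mul z w ▸ one_lt_mul_of_lt_of_le hz hw.le
    simp [h1] at hzw
  · obtain ⟨z, hz, rfl⟩ := exists_joukowski_eq w
    have hz1 : ‖z‖ ≠ 1 := fun h => hw ((joukowski_mem_segment_iff hz).mpr h)
    rcases hz1.lt_or_gt with hlt | hgt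
    · exact ⟨z⁻¹, by simpa using one_lt_inv_iff₀.mpr ⟨norm_pos_iff.mpr hz, hlt⟩, joukowski_inv z⟩
    · exact ⟨z, hgt, rfl⟩
end
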